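/- arXiv:0909.5450 — 9 statements merged into one kernel-verified Lean document; each statement's English description precedes it below -/
import Mathlib

section
/- Let η be a real random variable symmetric about 0 with finite fourth moment μ₄ = E[η⁴], variance σ² = E[η²] > 0, and characteristic function φ_η(t) = E[cos(tη)]. Define f(ω) = (1 − φ_η(2ω)) / (2ω²·φ_η(ω)²) for ω > 0. Then as ω → 0⁺, f(ω) = σ² − (1/3)·κ·σ⁴·ω² + o(ω²), where κ = μ₄/σ⁴ − 3 is the excess kurtosis; that is, f(ω) → σ² and (f(ω) − σ²)/ω² → −(1/3)·(μ₄ − 3σ⁴). -/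
/-!
Since `η ∈ L⁴`, the characteristic function of its law is `C⁴` with `k`-th derivative `iᵏ E[ηᵏ]`
at `0`, so taking real parts in Taylor's theorem gives
`φ(t) = 1 - σ² t² / 2 + μ₄ t⁴ / 24 + o(t⁴)`. With `g(t) = (1 - φ(t)) / t²` this says
`(g(t) - σ²/2) / t² → -μ₄/24`, hence `g(t) → σ²/2` and `φ(t) → 1`; and `(f(ω) - σ²) / ω²` is a
rational expression in `(g(2ω) - σ²/2) / (2ω)²`, `g(ω)` and `φ(ω)`, whose limit is
`8 (-μ₄/24) + σ⁴ = -(μ₄ - 3σ⁴)/3`.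
-/

open MeasureTheory ProbabilityTheory Filter Topology Asymptotics

section CharacteristicFunction

open Complex

variable {Ω : Type*} {mΩ : MeasurableSpace Ω} {P : Measure Ω} [IsProbabilityMeasure P]
  {X : Ω → ℝ}

lemma re_charFun_map (hX : AEMeasurable X P) (t : ℝ) :
    (charFun (P.map X) t).re = ∫ ω, Real.cos (t * X ω) ∂P := by
  have hint : Integrable (fun ω => exp (t * X ω * I)) P :=
    .of_bound (by fun_prop) 1 (ae_of_all _ fun ω => by rw [← ofReal_mul, norm_exp_ofReal_mul_I])
  rw [charFun_apply_real, integral_map hX (by fun_prop), ← RCLike.re_to_complex,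
    ← integral_re hint]
  norm_cast
  simp only [RCLike.re_to_complex, exp_ofReal_mul_I_re]

lemma re_taylorWithinEval_charFun_map_four (hX : MemLp X 4 P) (t : ℝ) :
    (taylorWithinEval (charFun (P.map X)) 4 Set.univ 0 t).re
      = 1 - (∫ ω, X ω ^ 2 ∂P) * t ^ 2 / 2 + (∫ ω, X ω ^ 4 ∂P) * t ^ 4 / 24 := by
  have hX' := hX.aestronglyMeasurable.aemeasurable
  have hmoment (k : ℕ) : ∫ x, x ^ k ∂P.map X = ∫ ω, X ω ^ k ∂P := integral_map hX' (by fun_prop)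
  have : IsProbabilityMeasure (P.map X) := Measure.isProbabilityMeasure_map hX'
  rw [taylorWithinEval_charFun_zero ((memLp_map_measure_iff aestronglyMeasurable_id hX').2 hX)]
  simp only [Finset.sum_range_succ, Finset.range_one, Finset.sum_singleton, hmoment, mul_pow,
    pow_succ, pow_zero, Nat.factorial, Nat.succ_eq_add_one, Nat.cast_one, Nat.cast_ofNat,
    Nat.reduceAdd, Nat.reduceMul, integral_const, probReal_univ, smul_eq_mul, ofReal_one, inv_one,
    one_mul, mul_one, zero_add, I_mul_I, mul_neg, neg_mul, neg_neg, add_re, one_re, mul_re,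
    ofReal_re, ofReal_im, I_re, I_im, neg_re, inv_re, inv_im, re_ofNat, im_ofNat, normSq_ofNat,
    div_self_mul_self', mul_im, mul_zero, zero_mul, sub_self, sub_zero, add_zero, neg_zero, zero_div]
  ring

lemma integral_cos_mul_sub_taylor_isLittleO (hX : MemLp X 4 P) :
    (fun t => ∫ ω, Real.cos (t * X ω) ∂P
      - (1 - (∫ ω, X ω ^ 2 ∂P) * t ^ 2 / 2 + (∫ ω, X ω ^ 4 ∂P) * t ^ 4 / 24)) =o[𝓝 0] (· ^ 4) := by
  have hX' := hX.aestronglyMeasurable.aemeasurable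
  have htaylor := taylor_isLittleO_univ (x₀ := 0)
    (contDiff_charFun ((memLp_map_measure_iff aestronglyMeasurable_id hX').2 hX))
  refine ((isBigO_of_le _ fun t => ?_).trans_isLittleO htaylor).congr_right (by simp)
  rw [← re_charFun_map hX', ← re_taylorWithinEval_charFun_map_four hX, ← sub_re]
  exact abs_re_le_norm _

end CharacteristicFunction

lemma tendsto_of_tendsto_sub_div_sq {g : ℝ → ℝ} {c L : ℝ}
    (h : Tendsto (fun t => (g t - c) / t ^ 2) (𝓝[>] 0) (𝓝 L)) : Tendsto g (𝓝[>] 0) (𝓝 c) := by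
  have hsq : Tendsto (fun t : ℝ => t ^ 2) (𝓝[>] 0) (𝓝 0) :=
    (continuous_pow 2).tendsto' 0 0 (zero_pow two_ne_zero) |>.mono_left nhdsWithin_le_nhds
  refine (by simpa using tendsto_const_nhds.add (hsq.mul h) :
    Tendsto (fun t => c + t ^ 2 * ((g t - c) / t ^ 2)) (𝓝[>] 0) (𝓝 c)).congr' ?_
  filter_upwards [self_mem_nhdsWithin] with t (ht : 0 < t)
  field_simp
  ring

lemma tendsto_two_mul_nhdsGT_zero : Tendsto (fun t : ℝ => 2 * t) (𝓝[>] 0) (𝓝[>] 0) := by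
  refine tendsto_nhdsWithin_iff.2 ⟨?_, ?_⟩
  · exact (continuous_const_mul 2).tendsto' 0 0 (mul_zero 2) |>.mono_left nhdsWithin_le_nhds
  · filter_upwards [self_mem_nhdsWithin] with t (ht : 0 < t)
    exact mul_pos two_pos ht

noncomputable def asymptoticVariance (φ : ℝ → ℝ) (ω : ℝ) : ℝ :=
  (1 - φ (2 * ω)) / (2 * ω ^ 2 * φ ω ^ 2)

section AsymptoticVariance

variable {φ : ℝ → ℝ} {s m : ℝ}

/- With `g t = (1 - φ t) / t²`: `2 g(2ω) - s φ(ω)² = 2 (g(2ω) - s/2) + s (1 - φ ω) (1 + φ ω)`. -/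
lemma asymptoticVariance_sub_div_sq_eq {ω : ℝ} (hω : ω ≠ 0) (hφ : φ ω ≠ 0) :
    (asymptoticVariance φ ω - s) / ω ^ 2 =
      (8 * (((1 - φ (2 * ω)) / (2 * ω) ^ 2 - s / 2) / (2 * ω) ^ 2)
        + s * ((1 - φ ω) / ω ^ 2) * (1 + φ ω)) / φ ω ^ 2 := by
  unfold asymptoticVariance
  field_simp
  ring

lemma tendsto_one_sub_div_sq_sub_div_sq_of_isLittleO
    (h : (fun t => φ t - (1 - s * t ^ 2 / 2 + m * t ^ 4 / 24)) =o[𝓝[>] 0] (· ^ 4)) :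
    Tendsto (fun t => ((1 - φ t) / t ^ 2 - s / 2) / t ^ 2) (𝓝[>] 0) (𝓝 (-m / 24)) := by
  refine (by simpa using tendsto_const_nhds.sub h.tendsto_div_nhds_zero :
    Tendsto (fun t => -m / 24 - (φ t - (1 - s * t ^ 2 / 2 + m * t ^ 4 / 24)) / t ^ 4) (𝓝[>] 0)
      (𝓝 (-m / 24))).congr' ?_
  filter_upwards [self_mem_nhdsWithin] with t (ht : 0 < t)
  field_simp
  ring

theorem tendsto_asymptoticVariance_of_isLittleO
    (h : (fun t => φ t - (1 - s * t ^ 2 / 2 + m * t ^ 4 / 24)) =o[𝓝[>] 0] (· ^ 4)) :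
    Tendsto (asymptoticVariance φ) (𝓝[>] 0) (𝓝 s) ∧
    Tendsto (fun ω => (asymptoticVariance φ ω - s) / ω ^ 2) (𝓝[>] 0)
      (𝓝 (-(1 / 3) * (m - 3 * s ^ 2))) := by
  have hquot := tendsto_one_sub_div_sq_sub_div_sq_of_isLittleO h
  have hdiv : Tendsto (fun t => (1 - φ t) / t ^ 2) (𝓝[>] 0) (𝓝 (s / 2)) :=
    tendsto_of_tendsto_sub_div_sq hquot
  have hφ : Tendsto φ (𝓝[>] 0) (𝓝 1) :=
    tendsto_of_tendsto_sub_div_sq (hdiv.neg.congr fun t => by ring)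
  have hexp : Tendsto (fun ω => (asymptoticVariance φ ω - s) / ω ^ 2) (𝓝[>] 0)
      (𝓝 (-(1 / 3) * (m - 3 * s ^ 2))) := by
    rw [show -(1 / 3) * (m - 3 * s ^ 2) = (8 * (-m / 24) + s * (s / 2) * (1 + 1)) / 1 ^ 2 by ring]
    refine ((hquot.comp tendsto_two_mul_nhdsGT_zero).const_mul 8 |>.add
      ((hdiv.const_mul s).mul (hφ.const_add 1))).div (hφ.pow 2) (by norm_num) |>.congr' ?_
    filter_upwards [self_mem_nhdsWithin, hφ.eventually_ne one_ne_zero] with ω (hω : 0 < ω) hφω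
    exact (asymptoticVariance_sub_div_sq_eq hω.ne' hφω).symm
  exact ⟨tendsto_of_tendsto_sub_div_sq hexp, hexp⟩

end AsymptoticVariance

theorem asv_expansion_near_zero_general
    {Ω : Type*} [MeasureSpace Ω] [IsProbabilityMeasure (ℙ : Measure Ω)]
    (η : Ω → ℝ) (hL4 : MemLp η 4 ℙ)
    (μ4 s2 : ℝ)
    (hμ4 : μ4 = ∫ a, (η a) ^ 4 ∂ℙ)
    (hs2 : s2 = ∫ a, (η a) ^ 2 ∂ℙ)
    (φ : ℝ → ℝ) (hφ : ∀ t, φ t = ∫ a, Real.cos (t * η a) ∂ℙ)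
    (f : ℝ → ℝ) (hf : ∀ ω, f ω = (1 - φ (2 * ω)) / (2 * ω ^ 2 * (φ ω) ^ 2)) :
    Tendsto f (𝓝[>] 0) (𝓝 s2) ∧
    Tendsto (fun ω => (f ω - s2) / ω ^ 2) (𝓝[>] 0)
      (𝓝 (-(1 / 3) * (μ4 - 3 * s2 ^ 2))) := by
  obtain rfl : f = asymptoticVariance φ := funext hf
  obtain rfl : φ = fun t => ∫ a, Real.cos (t * η a) ∂ℙ := funext hφ
  subst hμ4 hs2
  exact tendsto_asymptoticVariance_of_isLittleO
    ((integral_cos_mul_sub_taylor_isLittleO hL4).mono nhdsWithin_le_nhds)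

/-- Small-`ω` expansion of the per-sensor-power-constraint asymptotic variance
`f(ω) = (1 - φ_η(2ω)) / (2 ω² φ_η(ω)²)`: as `ω → 0⁺`,
`f(ω) = σ² - (1/3) κ σ⁴ ω² + o(ω²)` where `κ = μ₄/σ⁴ - 3` is the excess
kurtosis; i.e. `f(ω) → σ²` and `(f(ω) - σ²)/ω² → -(1/3)(μ₄ - 3 σ⁴)`. -/
theorem asv_expansion_near_zero
    {Ω : Type*} [MeasureSpace Ω] [IsProbabilityMeasure (ℙ : Measure Ω)]
    (η : Ω → ℝ) (hmeas : Measurable η) (hL4 : MemLp η 4 ℙ)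
    (hsymm : IdentDistrib η (fun a => -η a) ℙ ℙ)
    (μ4 s2 : ℝ)
    (hμ4 : μ4 = ∫ a, (η a) ^ 4 ∂ℙ)
    (hs2 : s2 = ∫ a, (η a) ^ 2 ∂ℙ) (hs2pos : 0 < s2)
    (φ : ℝ → ℝ) (hφ : ∀ t, φ t = ∫ a, Real.cos (t * η a) ∂ℙ)
    (f : ℝ → ℝ) (hf : ∀ ω, f ω = (1 - φ (2 * ω)) / (2 * ω ^ 2 * (φ ω) ^ 2)) :
    Tendsto f (𝓝[>] 0) (𝓝 s2) ∧
    Tendsto (fun ω => (f ω - s2) / ω ^ 2) (𝓝[>] 0)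
      (𝓝 (-(1 / 3) * (μ4 - 3 * s2 ^ 2))) :=
  asv_expansion_near_zero_general η hL4 μ4 s2 hμ4 hs2 φ hφ f hf
end

section
/- Let σ > 0 and θ_R > 0, and define g(ω) = (1 − e^{−2σ²ω²}) / (2ω²·e^{−σ²ω²}) for ω > 0 (the per-sensor-power-constraint asymptotic variance when the sensing noise is Gaussian with variance σ²). Then g(ω) = σ²·sinh(σ²ω²)/(σ²ω²) > σ² for every ω > 0, and the infimum of g over ω ∈ (0, 2π/θ_R] equals σ². In particular, the best achievable asymptotic variance for Gaussian sensing noise under a per-sensor power constraint is exactly σ² and is not attained. -/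
open Filter Topology Set

/-! Writing `a = σ²ω²`, the numerator and denominator share the factor `e^{-a}`, so
`g(ω) = σ² · sinh a / a`. Since `sinh a > a` for `a > 0` every value exceeds `σ²`, while
`sinh a / a → 1` as `a → 0⁺` shows that `σ²` is approached as `ω → 0⁺`. -/

theorem isGLB_image_Ioc_of_tendsto_nhdsGT {α β : Type*}
    [TopologicalSpace α] [LinearOrder α] [OrderTopology α] [DenselyOrdered α]
    [TopologicalSpace β] [LinearOrder β] [OrderTopology β]
    {f : α → β} {a c : α} {L : β} (hac : a < c) (hlow : ∀ x ∈ Ioc a c, L ≤ f x)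
    (hf : Tendsto f (𝓝[>] a) (𝓝 L)) :
    IsGLB (f '' Ioc a c) L := by
  have := nhdsGT_neBot_of_exists_gt ⟨c, hac⟩
  refine isGLB_of_mem_closure (forall_mem_image.2 hlow) (mem_closure_of_tendsto hf ?_)
  filter_upwards [Ioo_mem_nhdsGT hac] with x hx using mem_image_of_mem f (Ioo_subset_Ioc_self hx)

namespace Real

theorem sinh_eq_one_sub_exp_neg_two_mul_div (x : ℝ) :
    sinh x = (1 - exp (-2 * x)) / (2 * exp (-x)) := by
  have hinv : exp x * exp (-x) = 1 := by rw [← exp_add, add_neg_cancel, exp_zero]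
  rw [sinh_eq, show -2 * x = -x + -x by ring, exp_add]
  field_simp
  linear_combination hinv

theorem one_lt_sinh_div_self {x : ℝ} (hx : 0 < x) : 1 < sinh x / x :=
  (one_lt_div hx).2 (self_lt_sinh_iff.2 hx)

theorem tendsto_sinh_div_self_nhdsNE_zero :
    Tendsto (fun x => sinh x / x) (𝓝[≠] 0) (𝓝 1) := by
  have h := hasDerivAt_iff_tendsto_slope.1 (hasDerivAt_sinh 0)
  rw [cosh_zero] at h
  refine h.congr fun x => ?_
  simp [slope_def_field, sinh_zero]

end Real

theorem gaussian_pspc_asv_eq_mul_sinh_div {σ ω : ℝ} (hσ : σ ≠ 0) (hω : ω ≠ 0) :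
    (1 - Real.exp (-2 * σ ^ 2 * ω ^ 2)) / (2 * ω ^ 2 * Real.exp (-σ ^ 2 * ω ^ 2))
      = σ ^ 2 * Real.sinh (σ ^ 2 * ω ^ 2) / (σ ^ 2 * ω ^ 2) := by
  rw [Real.sinh_eq_one_sub_exp_neg_two_mul_div,
    show -2 * σ ^ 2 * ω ^ 2 = -2 * (σ ^ 2 * ω ^ 2) by ring,
    show -σ ^ 2 * ω ^ 2 = -(σ ^ 2 * ω ^ 2) by ring]
  field_simp

theorem tendsto_sq_mul_sq_nhdsGT_zero {c : ℝ} (hc : c ≠ 0) :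
    Tendsto (fun ω : ℝ => c ^ 2 * ω ^ 2) (𝓝[>] 0) (𝓝[≠] 0) := by
  refine tendsto_nhdsWithin_of_tendsto_nhds_of_eventually_within _ ?_ ?_
  · exact (Continuous.tendsto' (by fun_prop) 0 0 (by simp)).mono_left nhdsWithin_le_nhds
  · filter_upwards [self_mem_nhdsWithin] with ω (hω : 0 < ω)
    exact (by positivity : (0 : ℝ) < c ^ 2 * ω ^ 2).ne'

/-- For Gaussian sensing noise under a per-sensor power constraint, the
asymptotic variance `g(ω) = (1 - e^{-2σ²ω²}) / (2 ω² e^{-σ²ω²})` equals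
`σ² sinh(σ²ω²)/(σ²ω²)`, is strictly greater than `σ²` for every `ω > 0`,
and its infimum over `ω ∈ (0, 2π/θ_R]` is exactly `σ²` (hence not attained). -/
theorem gaussian_pspc_asv_infimum
    (σ θR : ℝ) (hσ : 0 < σ) (hθR : 0 < θR)
    (g : ℝ → ℝ)
    (hg : ∀ ω, g ω = (1 - Real.exp (-2 * σ ^ 2 * ω ^ 2))
        / (2 * ω ^ 2 * Real.exp (-σ ^ 2 * ω ^ 2))) :
    (∀ ω > (0 : ℝ),
      g ω = σ ^ 2 * Real.sinh (σ ^ 2 * ω ^ 2) / (σ ^ 2 * ω ^ 2) ∧ σ ^ 2 < g ω) ∧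
    IsGLB (g '' Set.Ioc 0 (2 * Real.pi / θR)) (σ ^ 2) := by
  have hg_sinh : ∀ ω > (0 : ℝ),
      g ω = σ ^ 2 * (Real.sinh (σ ^ 2 * ω ^ 2) / (σ ^ 2 * ω ^ 2)) := fun ω hω => by
    rw [hg, gaussian_pspc_asv_eq_mul_sinh_div hσ.ne' hω.ne', mul_div_assoc]
  have hg_gt : ∀ ω > (0 : ℝ), σ ^ 2 < g ω := fun ω hω => by
    rw [hg_sinh ω hω]
    exact lt_mul_of_one_lt_right (by positivity) (Real.one_lt_sinh_div_self (by positivity))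
  have hg_lim : Tendsto g (𝓝[>] 0) (𝓝 (σ ^ 2)) := by
    have h := (Real.tendsto_sinh_div_self_nhdsNE_zero.comp
      (tendsto_sq_mul_sq_nhdsGT_zero hσ.ne')).const_mul (σ ^ 2)
    rw [mul_one] at h
    refine h.congr' ?_
    filter_upwards [self_mem_nhdsWithin] with ω (hω : 0 < ω)
    exact (hg_sinh ω hω).symm
  refine ⟨fun ω hω => ⟨?_, hg_gt ω hω⟩, ?_⟩
  · rw [hg_sinh ω hω, mul_div_assoc]
  · exact isGLB_image_Ioc_of_tendsto_nhdsGT (by positivity)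
      (fun ω hω => (hg_gt ω hω.1).le) hg_lim
end

section
/- Let a > 0 and define g(β) = (a + 2β) / ( 2β·(1 − β/2)² ) for β ∈ (0, 2). Set c = −3a + √(a·(32 + 9a)). Then 0 < c/8 < 2, β = c/8 is the unique stationary point of g on (0, 2), g attains its global minimum over (0, 2) at β = c/8 with minimum value (4a + c) / ( c·(1 − c/16)² ), and g is nonincreasing on (0, c/8]. -/
open Filter Topology Set

/-!
The derivative of `g` is `(4β² + 3aβ - 2a) / (4β² (1 - β/2)³)`, whose sign on `(0, 2)` is that of
the quadratic `4β² + 3aβ - 2a`. Its positive root is `r = c/8`, since `c² + 6ac = 32a`; so `g`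
decreases strictly on `(0, r]`, increases strictly on `[r, 2)`, and has its minimum at `r`.
-/

noncomputable def asvObjective (a β : ℝ) : ℝ := (a + 2 * β) / (2 * β * (1 - β / 2) ^ 2)

lemma asvObjective_div_eight (a c : ℝ) :
    asvObjective a (c / 8) = (4 * a + c) / (c * (1 - c / 16) ^ 2) := by
  rw [asvObjective, ← mul_div_mul_left _ _ (four_ne_zero' ℝ)]
  congr 1 <;> ring

lemma hasDerivAt_asvObjective (a : ℝ) {β : ℝ} (h0 : β ≠ 0) (h2 : β ≠ 2) :
    HasDerivAt (asvObjective a)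
      ((4 * β ^ 2 + 3 * a * β - 2 * a) / (4 * β ^ 2 * (1 - β / 2) ^ 3)) β := by
  have h2' : 1 - β / 2 ≠ 0 := fun h => h2 (by linarith)
  have hnum : HasDerivAt (fun x : ℝ => a + 2 * x) 2 β :=
    (((hasDerivAt_id' β).const_mul 2).const_add a).congr_deriv (mul_one 2)
  have hden : HasDerivAt (fun x : ℝ => 2 * x * (1 - x / 2) ^ 2)
      (2 * (1 - β / 2) ^ 2 - 2 * β * (1 - β / 2)) β :=
    (((hasDerivAt_id' β).const_mul 2).mul
      ((((hasDerivAt_id' β).div_const 2).const_sub 1).fun_pow 2)).congr_deriv (by ring)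
  refine (hnum.fun_div hden (by positivity)).congr_deriv ?_
  field_simp
  ring

lemma quadratic_eq_mul_of_root {a r : ℝ} (hr : 4 * r ^ 2 + 3 * a * r = 2 * a) (β : ℝ) :
    4 * β ^ 2 + 3 * a * β - 2 * a = 4 * (β - r) * (β + r + 3 * a / 4) := by
  linear_combination hr

section PositiveRoot

variable {a r : ℝ}

lemma root_lt_two (ha : 0 ≤ a) (hr0 : 0 < r) (hr : 4 * r ^ 2 + 3 * a * r = 2 * a) : r < 2 := by
  nlinarith

lemma hasDerivAt_asvObjective_of_root (hr : 4 * r ^ 2 + 3 * a * r = 2 * a) {β : ℝ}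
    (h0 : β ≠ 0) (h2 : β ≠ 2) :
    HasDerivAt (asvObjective a)
      (4 * (β - r) * (β + r + 3 * a / 4) / (4 * β ^ 2 * (1 - β / 2) ^ 3)) β := by
  simpa only [quadratic_eq_mul_of_root hr] using hasDerivAt_asvObjective a h0 h2

lemma continuousOn_asvObjective : ContinuousOn (asvObjective a) (Ioo 0 2) := fun _ hβ =>
  (hasDerivAt_asvObjective a hβ.1.ne' hβ.2.ne).continuousAt.continuousWithinAt

lemma deriv_asvObjective_eq_mul (ha : 0 ≤ a) (hr0 : 0 < r) (hr : 4 * r ^ 2 + 3 * a * r = 2 * a)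
    {β : ℝ} (hβ : β ∈ Ioo (0 : ℝ) 2) :
    ∃ k > 0, deriv (asvObjective a) β = (β - r) * k := by
  obtain ⟨h0, h2⟩ := hβ
  have hden : 0 < 4 * β ^ 2 * (1 - β / 2) ^ 3 := by
    have : 0 < 1 - β / 2 := by linarith
    positivity
  refine ⟨4 * (β + r + 3 * a / 4) / (4 * β ^ 2 * (1 - β / 2) ^ 3), by positivity, ?_⟩
  rw [(hasDerivAt_asvObjective_of_root hr h0.ne' h2.ne).deriv]
  ring

lemma strictAntiOn_asvObjective (ha : 0 ≤ a) (hr0 : 0 < r)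
    (hr : 4 * r ^ 2 + 3 * a * r = 2 * a) : StrictAntiOn (asvObjective a) (Ioc 0 r) := by
  have hsub : Ioc 0 r ⊆ Ioo (0 : ℝ) 2 := fun β hβ => ⟨hβ.1, hβ.2.trans_lt (root_lt_two ha hr0 hr)⟩
  refine strictAntiOn_of_deriv_neg (convex_Ioc 0 r) (continuousOn_asvObjective.mono hsub) ?_
  intro β hβ
  rw [interior_Ioc] at hβ
  obtain ⟨k, hk, hderiv⟩ :=
    deriv_asvObjective_eq_mul ha hr0 hr (hsub (Ioo_subset_Ioc_self hβ))
  rw [hderiv]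
  exact mul_neg_of_neg_of_pos (by linarith [hβ.2]) hk

lemma strictMonoOn_asvObjective (ha : 0 ≤ a) (hr0 : 0 < r)
    (hr : 4 * r ^ 2 + 3 * a * r = 2 * a) : StrictMonoOn (asvObjective a) (Ico r 2) := by
  have hsub : Ico r 2 ⊆ Ioo (0 : ℝ) 2 := fun β hβ => ⟨hr0.trans_le hβ.1, hβ.2⟩
  refine strictMonoOn_of_deriv_pos (convex_Ico r 2) (continuousOn_asvObjective.mono hsub) ?_
  intro β hβ
  rw [interior_Ico] at hβ
  obtain ⟨k, hk, hderiv⟩ :=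
    deriv_asvObjective_eq_mul ha hr0 hr (hsub (Ioo_subset_Ico_self hβ))
  rw [hderiv]
  exact mul_pos (by linarith [hβ.1]) hk

lemma eq_root_of_deriv_asvObjective_eq_zero (ha : 0 ≤ a) (hr0 : 0 < r)
    (hr : 4 * r ^ 2 + 3 * a * r = 2 * a) {β : ℝ} (hβ : β ∈ Ioo (0 : ℝ) 2)
    (hderiv : deriv (asvObjective a) β = 0) : β = r := by
  obtain ⟨k, hk, hk'⟩ := deriv_asvObjective_eq_mul ha hr0 hr hβ
  rw [hderiv, eq_comm, mul_eq_zero, sub_eq_zero] at hk'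
  exact hk'.resolve_right hk.ne'

lemma isMinOn_asvObjective (ha : 0 ≤ a) (hr0 : 0 < r) (hr : 4 * r ^ 2 + 3 * a * r = 2 * a) :
    IsMinOn (asvObjective a) (Ioo 0 2) r := by
  intro β hβ
  rcases le_total β r with hle | hle
  · exact (strictAntiOn_asvObjective ha hr0 hr).antitoneOn ⟨hβ.1, hle⟩ ⟨hr0, le_rfl⟩ hle
  · exact (strictMonoOn_asvObjective ha hr0 hr).monotoneOn
      ⟨le_rfl, root_lt_two ha hr0 hr⟩ ⟨hle, hβ.2⟩ hle

end PositiveRoot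

lemma neg_three_mul_add_sqrt_spec {a c : ℝ} (ha : 0 < a)
    (hc : c = -3 * a + Real.sqrt (a * (32 + 9 * a))) : c ^ 2 + 6 * a * c = 32 * a ∧ 0 < c := by
  have hsq : Real.sqrt (a * (32 + 9 * a)) ^ 2 = a * (32 + 9 * a) := Real.sq_sqrt (by positivity)
  have hsqrt : 3 * a < Real.sqrt (a * (32 + 9 * a)) := by
    rw [Real.lt_sqrt (by positivity)]
    nlinarith
  subst hc
  exact ⟨by linear_combination hsq, by linarith⟩

/-- Optimization of `g(β) = (a + 2β) / (2β (1 - β/2)²)` on `(0, 2)`: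
with `c = -3a + √(a(32 + 9a))` one has `0 < c/8 < 2`, `β = c/8` is the unique
stationary point of `g` on `(0, 2)`, `g` attains its global minimum over
`(0, 2)` at `c/8` with value `(4a + c)/(c (1 - c/16)²)`, and `g` is
nonincreasing on `(0, c/8]`. -/
theorem asv_bound_optimization
    (a : ℝ) (ha : 0 < a)
    (c : ℝ) (hc : c = -3 * a + Real.sqrt (a * (32 + 9 * a)))
    (g : ℝ → ℝ)
    (hg : ∀ β, g β = (a + 2 * β) / (2 * β * (1 - β / 2) ^ 2)) :
    0 < c / 8 ∧ c / 8 < 2 ∧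
    deriv g (c / 8) = 0 ∧
    (∀ β ∈ Set.Ioo (0 : ℝ) 2, deriv g β = 0 → β = c / 8) ∧
    g (c / 8) = (4 * a + c) / (c * (1 - c / 16) ^ 2) ∧
    (∀ β ∈ Set.Ioo (0 : ℝ) 2, g (c / 8) ≤ g β) ∧
    AntitoneOn g (Set.Ioc 0 (c / 8)) := by
  obtain rfl : g = asvObjective a := funext hg
  obtain ⟨hroot, hc0⟩ := neg_three_mul_add_sqrt_spec ha hc
  have hr : 4 * (c / 8) ^ 2 + 3 * a * (c / 8) = 2 * a := by linear_combination hroot / 16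
  have hr0 : 0 < c / 8 := by positivity
  have hr2 : c / 8 < 2 := root_lt_two ha.le hr0 hr
  have hderiv : deriv (asvObjective a) (c / 8) = 0 := by
    rw [(hasDerivAt_asvObjective_of_root hr hr0.ne' hr2.ne).deriv]
    simp
  exact ⟨hr0, hr2, hderiv, fun β hβ => eq_root_of_deriv_asvObjective_eq_zero ha.le hr0 hr hβ,
    asvObjective_div_eight a c, isMinOn_asvObjective ha.le hr0 hr,
    (strictAntiOn_asvObjective ha.le hr0 hr).antitoneOn⟩
end

section
/- Let a > 0 and define h(β) = e^{β}·(a + 1 − e^{−2β}) / (2β) for β > 0 (the asymptotic variance for Gaussian sensing noise, after the substitution β = σ²ω²). Then there exists a unique β* > 0 satisfying the stationarity equation (a + 1)·(β − 1)·e^{2β} + β + 1 = 0, and β* is the unique global minimizer of h on (0, ∞); in particular h is strictly decreasing on (0, β*]. Consequently, for σ, θ_R > 0, the minimizer of h(σ²ω²) over ω ∈ (0, 2π/θ_R] is ω* = min( 2π/θ_R, √β*/σ ). -/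
/-!
`h'(β) = e^β g(β) / (2β²)` with `g(β) = (a + 1)(β - 1) + (β + 1) e^{-2β}`, which is `e^{-2β}` times
the stationarity expression. Since `g' = a + 1 - (2β + 1) e^{-2β} > 0` (as `2β + 1 < e^{2β}`),
`g` is strictly increasing on `[0, ∞)`, and `g(0) = -a < 0 < g(1)`; so `g` has a unique zero `β*`,
before which `h` decreases and after which it increases. For `ω ∈ (0, c]` the argument `σ²ω²`
ranges over `(0, σ²c²]`, where `h` is minimized at `min (σ²c²) β* = σ² (min c (√β* / σ))²`.
-/

open Set Real

noncomputable section

def gaussianAsv (a β : ℝ) : ℝ := exp β * (a + 1 - exp (-2 * β)) / (2 * β)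

def gaussianAsvDerivFactor (a β : ℝ) : ℝ := (a + 1) * (β - 1) + (β + 1) * exp (-2 * β)

end

section GaussianAsv

variable {a : ℝ}

lemma hasDerivAt_exp_neg_two_mul (β : ℝ) :
    HasDerivAt (fun x => exp (-2 * x)) (exp (-2 * β) * -2) β := by
  have hlin : HasDerivAt (fun x : ℝ => -2 * x) (-2) β := by
    simpa using (hasDerivAt_id β).const_mul (-2 : ℝ)
  exact (Real.hasDerivAt_exp (-2 * β)).comp β hlin

lemma hasDerivAt_gaussianAsvDerivFactor (a β : ℝ) :
    HasDerivAt (gaussianAsvDerivFactor a) ((a + 1) - (2 * β + 1) * exp (-2 * β)) β := by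
  have := (((hasDerivAt_id β).sub_const 1).const_mul (a + 1)).add
    (((hasDerivAt_id β).add_const 1).mul (hasDerivAt_exp_neg_two_mul β))
  exact this.congr_deriv (by simp only [id]; ring)

lemma hasDerivAt_gaussianAsv (a : ℝ) {β : ℝ} (hβ : β ≠ 0) :
    HasDerivAt (gaussianAsv a) (exp β * gaussianAsvDerivFactor a β / (2 * β ^ 2)) β := by
  have hnum : HasDerivAt (fun x => exp x * (a + 1 - exp (-2 * x)))
      (exp β * (a + 1 - exp (-2 * β)) + exp β * (0 - exp (-2 * β) * -2)) β :=
    (Real.hasDerivAt_exp β).mul ((hasDerivAt_const β (a + 1)).sub (hasDerivAt_exp_neg_two_mul β))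
  have hden : HasDerivAt (fun x : ℝ => 2 * x) 2 β := by
    simpa using (hasDerivAt_id β).const_mul (2 : ℝ)
  refine (hnum.div hden (by simpa using hβ)).congr_deriv ?_
  unfold gaussianAsvDerivFactor
  field_simp
  ring

lemma continuousOn_gaussianAsv (a : ℝ) : ContinuousOn (gaussianAsv a) (Ioi 0) :=
  fun _ hx => (hasDerivAt_gaussianAsv a (ne_of_gt hx)).continuousAt.continuousWithinAt

lemma mul_exp_neg_two_mul_lt_one {x : ℝ} (hx : 0 < x) : (2 * x + 1) * exp (-2 * x) < 1 := by
  rw [show -2 * x = -(2 * x) by ring, exp_neg, ← div_eq_mul_inv, div_lt_one (exp_pos _)]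
  linarith [add_one_lt_exp (by positivity : 2 * x ≠ 0)]

lemma gaussianAsvDerivFactor_strictMonoOn (ha : 0 ≤ a) :
    StrictMonoOn (gaussianAsvDerivFactor a) (Ici 0) := by
  refine strictMonoOn_of_deriv_pos (convex_Ici 0)
    (fun x _ => (hasDerivAt_gaussianAsvDerivFactor a x).continuousAt.continuousWithinAt) ?_
  intro x hx
  rw [interior_Ici] at hx
  rw [(hasDerivAt_gaussianAsvDerivFactor a x).deriv]
  linarith [mul_exp_neg_two_mul_lt_one hx]

lemma exists_gaussianAsvDerivFactor_eq_zero (ha : 0 < a) :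
    ∃ β ∈ Ioo 0 1, gaussianAsvDerivFactor a β = 0 := by
  have hcont : ContinuousOn (gaussianAsvDerivFactor a) (Icc 0 1) :=
    fun x _ => (hasDerivAt_gaussianAsvDerivFactor a x).continuousAt.continuousWithinAt
  refine intermediate_value_Ioo zero_le_one hcont ⟨?_, ?_⟩
  · simp [gaussianAsvDerivFactor, ha]
  · simp only [gaussianAsvDerivFactor]
    norm_num
    positivity

lemma gaussianAsvDerivFactor_eq_zero_iff (a β : ℝ) :
    gaussianAsvDerivFactor a β = 0 ↔ (a + 1) * (β - 1) * exp (2 * β) + β + 1 = 0 := by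
  have hexp : exp (2 * β) * exp (-2 * β) = 1 := by rw [← exp_add]; norm_num
  have hmul : exp (2 * β) * gaussianAsvDerivFactor a β
      = (a + 1) * (β - 1) * exp (2 * β) + β + 1 := by
    unfold gaussianAsvDerivFactor
    linear_combination (β + 1) * hexp
  rw [← hmul, mul_eq_zero, or_iff_right (exp_pos _).ne']

variable {βs : ℝ}

lemma gaussianAsv_strictAntiOn (ha : 0 ≤ a) (hβs : gaussianAsvDerivFactor a βs = 0) :
    StrictAntiOn (gaussianAsv a) (Ioc 0 βs) := by
  refine strictAntiOn_of_deriv_neg (convex_Ioc 0 βs)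
    ((continuousOn_gaussianAsv a).mono Ioc_subset_Ioi_self) ?_
  intro x hx
  rw [interior_Ioc] at hx
  rw [(hasDerivAt_gaussianAsv a (ne_of_gt hx.1)).deriv]
  have hneg : gaussianAsvDerivFactor a x < 0 :=
    hβs ▸ gaussianAsvDerivFactor_strictMonoOn ha hx.1.le (hx.1.trans hx.2).le hx.2
  have hx0 := hx.1
  exact div_neg_of_neg_of_pos (mul_neg_of_pos_of_neg (exp_pos x) hneg) (by positivity)

lemma gaussianAsv_strictMonoOn (ha : 0 ≤ a) (hβs0 : 0 < βs)
    (hβs : gaussianAsvDerivFactor a βs = 0) : StrictMonoOn (gaussianAsv a) (Ici βs) := by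
  refine strictMonoOn_of_deriv_pos (convex_Ici βs)
    ((continuousOn_gaussianAsv a).mono (Ici_subset_Ioi.mpr hβs0)) ?_
  intro x hx
  rw [interior_Ici] at hx
  have hx0 : 0 < x := hβs0.trans hx
  rw [(hasDerivAt_gaussianAsv a hx0.ne').deriv]
  have hpos : 0 < gaussianAsvDerivFactor a x :=
    hβs ▸ gaussianAsvDerivFactor_strictMonoOn ha hβs0.le hx0.le hx
  positivity

lemma gaussianAsv_lt_of_ne (ha : 0 ≤ a) (hβs0 : 0 < βs) (hβs : gaussianAsvDerivFactor a βs = 0)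
    {β : ℝ} (hβ : 0 < β) (hne : β ≠ βs) : gaussianAsv a βs < gaussianAsv a β := by
  rcases hne.lt_or_gt with hlt | hgt
  · exact gaussianAsv_strictAntiOn ha hβs ⟨hβ, hlt.le⟩ ⟨hβs0, le_rfl⟩ hlt
  · exact gaussianAsv_strictMonoOn ha hβs0 hβs (mem_Ici.mpr le_rfl) hgt.le hgt

end GaussianAsv

lemma sq_mul_min_sqrt_div {σ c b : ℝ} (hσ : 0 < σ) (hc : 0 ≤ c) (hb : 0 ≤ b) :
    σ ^ 2 * min c (√b / σ) ^ 2 = min (σ ^ 2 * c ^ 2) b := by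
  rw [← mul_pow, mul_min_of_nonneg _ _ hσ.le, mul_div_cancel₀ _ hσ.ne']
  have hσc : 0 ≤ σ * c := mul_nonneg hσ.le hc
  rcases le_total (σ * c) √b with hle | hle
  · have hsq := pow_le_pow_left₀ hσc hle 2
    rw [sq_sqrt hb] at hsq
    rw [min_eq_left hle, ← mul_pow, min_eq_left hsq]
  · have hsq := pow_le_pow_left₀ (sqrt_nonneg b) hle 2
    rw [sq_sqrt hb] at hsq
    rw [min_eq_right hle, ← mul_pow, min_eq_right hsq, sq_sqrt hb]

lemma isMinOn_comp_sq_mul_min {f : ℝ → ℝ} {b σ c : ℝ} (hb : 0 < b)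
    (hanti : AntitoneOn f (Ioc 0 b)) (hmin : IsMinOn f (Ioi 0) b) (hσ : 0 < σ) (hc : 0 < c) :
    IsMinOn (fun ω => f (σ ^ 2 * ω ^ 2)) (Ioc 0 c) (min c (√b / σ)) := by
  rintro ω ⟨hω0, hωc⟩
  show f (σ ^ 2 * min c (√b / σ) ^ 2) ≤ f (σ ^ 2 * ω ^ 2)
  rw [sq_mul_min_sqrt_div hσ hc.le hb.le]
  rcases le_total (σ ^ 2 * c ^ 2) b with hcb | hbc
  · have hωle : σ ^ 2 * ω ^ 2 ≤ σ ^ 2 * c ^ 2 := by gcongr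
    rw [min_eq_left hcb]
    exact hanti ⟨by positivity, hωle.trans hcb⟩ ⟨by positivity, hcb⟩ hωle
  · rw [min_eq_right hbc]
    exact hmin (show 0 < σ ^ 2 * ω ^ 2 by positivity)

/-- Optimization of the Gaussian-sensing-noise asymptotic variance
`h(β) = e^β (a + 1 - e^{-2β}) / (2β)` (with `β = σ²ω²`): there is a unique
`β* > 0` solving `(a+1)(β-1)e^{2β} + β + 1 = 0`, it is the unique global
minimizer of `h` on `(0, ∞)`, `h` is strictly decreasing on `(0, β*]`, and for
any `σ, θ_R > 0` the minimizer of `ω ↦ h(σ²ω²)` over `(0, 2π/θ_R]` is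
`ω* = min (2π/θ_R) (√β*/σ)`. -/
theorem gaussian_asv_optimal_omega
    (a : ℝ) (ha : 0 < a)
    (h : ℝ → ℝ)
    (hh : ∀ β, h β = Real.exp β * (a + 1 - Real.exp (-2 * β)) / (2 * β)) :
    ∃ βs : ℝ, 0 < βs ∧
      ((a + 1) * (βs - 1) * Real.exp (2 * βs) + βs + 1 = 0) ∧
      (∀ β > (0 : ℝ), (a + 1) * (β - 1) * Real.exp (2 * β) + β + 1 = 0 → β = βs) ∧
      (∀ β > (0 : ℝ), β ≠ βs → h βs < h β) ∧
      StrictAntiOn h (Set.Ioc 0 βs) ∧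
      ∀ σ θR : ℝ, 0 < σ → 0 < θR →
        min (2 * Real.pi / θR) (Real.sqrt βs / σ) ∈ Set.Ioc 0 (2 * Real.pi / θR) ∧
        ∀ ω ∈ Set.Ioc 0 (2 * Real.pi / θR),
          h (σ ^ 2 * (min (2 * Real.pi / θR) (Real.sqrt βs / σ)) ^ 2)
            ≤ h (σ ^ 2 * ω ^ 2) := by
  obtain rfl : h = gaussianAsv a := funext hh
  obtain ⟨βs, ⟨hβs0, -⟩, hβs⟩ := exists_gaussianAsvDerivFactor_eq_zero ha
  have hmin : ∀ β > (0 : ℝ), β ≠ βs → gaussianAsv a βs < gaussianAsv a β :=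
    fun β hβ => gaussianAsv_lt_of_ne ha.le hβs0 hβs hβ
  have hanti := gaussianAsv_strictAntiOn ha.le hβs
  refine ⟨βs, hβs0, (gaussianAsvDerivFactor_eq_zero_iff a βs).mp hβs, ?_, hmin, hanti, ?_⟩
  · intro β hβ hstat
    exact (gaussianAsvDerivFactor_strictMonoOn ha.le).injOn hβ.le hβs0.le
      (((gaussianAsvDerivFactor_eq_zero_iff a β).mpr hstat).trans hβs.symm)
  · intro σ θR hσ hθR
    have hc : 0 < 2 * π / θR := by positivity
    refine ⟨⟨lt_min hc (by positivity), min_le_left _ _⟩, ?_⟩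
    have hglobal : IsMinOn (gaussianAsv a) (Ioi 0) βs := isMinOn_iff.mpr fun β hβ => by
      rcases eq_or_ne β βs with rfl | hne
      exacts [le_rfl, (hmin β hβ hne).le]
    exact isMinOn_comp_sq_mul_min hβs0 hanti.antitoneOn hglobal hσ hc
end

section
/- Let a > 0 and γ > 0, and define f(ω) = ( (a + 1)·e^{2γω} − 1 ) / (2ω²) for ω > 0 (the asymptotic variance for Cauchy sensing noise with scale γ, where φ_η(ω) = e^{−γω}). Then there exists a unique ω* > 0 satisfying the stationarity equation (a + 1)·(γω − 1)·e^{2γω} + 1 = 0, and ω* is the unique global minimizer of f on (0, ∞); in particular f is strictly decreasing on (0, ω*]. Consequently, for θ_R > 0, the minimizer of f over ω ∈ (0, 2π/θ_R] is min(2π/θ_R, ω*). -/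
/-!
`f` has derivative `g(ω)/ω³` with `g(ω) = c(γω - 1)e^{2γω} + 1` and `c = a + 1 > 1`. Since
`g'(ω) = cγe^{2γω}(2γω - 1)`, `g` decreases on `[0, 1/(2γ)]` from `g(0) = 1 - c < 0` and then
increases strictly, reaching `g(1/γ) = 1`. So `g` has a single positive root `ω*`, negative before
and positive after it, and `f` decreases on `(0, ω*]` and increases on `[ω*, ∞)`.
On `(0, L]` the minimum is then at `ω*` if `ω* ≤ L` and at `L` otherwise.
-/

open Real Set

theorem isMinOn_Ioc_min_of_antitoneOn {α β : Type*} [LinearOrder α] [Preorder β] {f : α → β}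
    {a s : α} (hmin : IsMinOn f (Ioi a) s) (hanti : AntitoneOn f (Ioc a s)) (L : α) :
    IsMinOn f (Ioc a L) (min L s) := by
  intro ω hω
  rcases le_total s L with hsL | hLs
  · rw [min_eq_right hsL]
    exact hmin hω.1
  · rw [min_eq_left hLs]
    exact hanti ⟨hω.1, hω.2.trans hLs⟩ ⟨hω.1.trans_le hω.2, hLs⟩ hω.2

noncomputable section

namespace CauchyASV

/-- The asymptotic variance, with `c = a + 1`. -/
def asv (c γ ω : ℝ) : ℝ := (c * exp (2 * γ * ω) - 1) / (2 * ω ^ 2)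

def stationarity (c γ ω : ℝ) : ℝ := c * (γ * ω - 1) * exp (2 * γ * ω) + 1

variable {c γ : ℝ}

theorem hasDerivAt_stationarity (ω : ℝ) :
    HasDerivAt (stationarity c γ) (c * γ * exp (2 * γ * ω) * (2 * γ * ω - 1)) ω := by
  have hlin : HasDerivAt (fun ω : ℝ => γ * ω - 1) γ ω := by
    simpa using ((hasDerivAt_id ω).const_mul γ).sub_const 1
  have hexp : HasDerivAt (fun ω : ℝ => exp (2 * γ * ω)) (exp (2 * γ * ω) * (2 * γ)) ω := by
    simpa using ((hasDerivAt_id ω).const_mul (2 * γ)).exp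
  have hfun : stationarity c γ = fun ω => c * ((γ * ω - 1) * exp (2 * γ * ω)) + 1 := by
    funext x; simp only [stationarity]; ring
  rw [hfun]
  exact (((hlin.mul hexp).const_mul c).add_const 1).congr_deriv (by ring)

theorem continuous_stationarity : Continuous (stationarity c γ) := by
  unfold stationarity; fun_prop

theorem stationarity_zero : stationarity c γ 0 = 1 - c := by
  simp [stationarity]; ring

theorem stationarity_inv (hγ : γ ≠ 0) : stationarity c γ γ⁻¹ = 1 := by
  simp [stationarity, hγ]

theorem stationarity_strictAntiOn (hc : 0 < c) (hγ : 0 < γ) :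
    StrictAntiOn (stationarity c γ) (Icc 0 (2 * γ)⁻¹) := by
  refine strictAntiOn_of_deriv_neg (convex_Icc _ _) continuous_stationarity.continuousOn ?_
  intro ω hω
  rw [interior_Icc] at hω
  rw [(hasDerivAt_stationarity ω).deriv]
  have hlt : 2 * γ * ω < 1 := by
    have h2γ : (0 : ℝ) < 2 * γ := by positivity
    have h := mul_lt_mul_of_pos_left hω.2 h2γ
    rwa [mul_inv_cancel₀ h2γ.ne'] at h
  exact mul_neg_of_pos_of_neg (by positivity) (by linarith)

theorem stationarity_strictMonoOn (hc : 0 < c) (hγ : 0 < γ) :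
    StrictMonoOn (stationarity c γ) (Ici (2 * γ)⁻¹) := by
  refine strictMonoOn_of_deriv_pos (convex_Ici _) continuous_stationarity.continuousOn ?_
  intro ω hω
  rw [interior_Ici] at hω
  rw [(hasDerivAt_stationarity ω).deriv]
  have hgt : 1 < 2 * γ * ω := by
    have h2γ : (0 : ℝ) < 2 * γ := by positivity
    have h := mul_lt_mul_of_pos_left hω.out h2γ
    rwa [mul_inv_cancel₀ h2γ.ne'] at h
  have : 0 < 2 * γ * ω - 1 := by linarith
  positivity

theorem stationarity_neg (hc : 1 < c) (hγ : 0 < γ) {ω : ℝ} (hω : ω ∈ Icc 0 (2 * γ)⁻¹) :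
    stationarity c γ ω < 0 := by
  have h0 : (0 : ℝ) ∈ Icc 0 (2 * γ)⁻¹ := ⟨le_rfl, by positivity⟩
  calc stationarity c γ ω ≤ stationarity c γ 0 :=
        (stationarity_strictAntiOn (by linarith) hγ).antitoneOn h0 hω hω.1
    _ < 0 := by rw [stationarity_zero]; linarith

theorem exists_stationarity_root (hc : 1 < c) (hγ : 0 < γ) :
    ∃ s, 0 < s ∧ stationarity c γ s = 0 ∧
      (∀ ω ∈ Ico 0 s, stationarity c γ ω < 0) ∧ ∀ ω > s, 0 < stationarity c γ ω := by
  have hm : (0 : ℝ) < (2 * γ)⁻¹ := by positivity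
  have hmid : stationarity c γ (2 * γ)⁻¹ < 0 := stationarity_neg hc hγ ⟨hm.le, le_rfl⟩
  have hle : (2 * γ)⁻¹ ≤ γ⁻¹ := inv_anti₀ hγ (by linarith)
  obtain ⟨s, hs, hroot⟩ := intermediate_value_Icc hle continuous_stationarity.continuousOn
    ⟨hmid.le, (stationarity_inv hγ.ne').symm ▸ zero_le_one⟩
  have hms : (2 * γ)⁻¹ < s := hs.1.lt_of_ne (by rintro rfl; linarith)
  have hmono := stationarity_strictMonoOn (c := c) (by linarith) hγ
  refine ⟨s, hm.trans hms, hroot, fun ω hω => ?_, fun ω hω => ?_⟩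
  · rcases le_or_gt ω (2 * γ)⁻¹ with hωm | hωm
    · exact stationarity_neg hc hγ ⟨hω.1, hωm⟩
    · exact (hmono hωm.le hms.le hω.2).trans_eq hroot
  · exact hroot.symm.trans_lt (hmono hms.le (hms.le.trans hω.le) hω)

theorem hasDerivAt_asv {ω : ℝ} (hω : ω ≠ 0) :
    HasDerivAt (asv c γ) (stationarity c γ ω / ω ^ 3) ω := by
  have hexp : HasDerivAt (fun ω : ℝ => exp (2 * γ * ω)) (exp (2 * γ * ω) * (2 * γ)) ω := by
    simpa using ((hasDerivAt_id ω).const_mul (2 * γ)).exp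
  have hden : HasDerivAt (fun ω : ℝ => 2 * ω ^ 2) (2 * (2 * ω)) ω := by
    simpa using (hasDerivAt_pow 2 ω).const_mul 2
  refine ((hexp.const_mul c).sub_const 1).div hden (by positivity) |>.congr_deriv ?_
  simp only [stationarity]
  field_simp
  ring

theorem continuousOn_asv : ContinuousOn (asv c γ) (Ioi 0) :=
  fun _ hω => (hasDerivAt_asv (ne_of_gt hω)).continuousAt.continuousWithinAt

theorem asv_strictAntiOn {s : ℝ} (hneg : ∀ ω ∈ Ioo 0 s, stationarity c γ ω < 0) :
    StrictAntiOn (asv c γ) (Ioc 0 s) := by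
  refine strictAntiOn_of_deriv_neg (convex_Ioc _ _)
    (continuousOn_asv.mono fun _ hω => hω.1) fun ω hω => ?_
  rw [interior_Ioc] at hω
  rw [(hasDerivAt_asv hω.1.ne').deriv]
  exact div_neg_of_neg_of_pos (hneg ω hω) (pow_pos hω.1 3)

theorem asv_strictMonoOn {s : ℝ} (hs : 0 < s) (hpos : ∀ ω > s, 0 < stationarity c γ ω) :
    StrictMonoOn (asv c γ) (Ici s) := by
  refine strictMonoOn_of_deriv_pos (convex_Ici _)
    (continuousOn_asv.mono fun _ hω => hs.trans_le hω) fun ω hω => ?_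
  rw [interior_Ici] at hω
  have hω0 : 0 < ω := hs.trans hω
  rw [(hasDerivAt_asv hω0.ne').deriv]
  exact div_pos (hpos ω hω) (pow_pos hω0 3)

end CauchyASV

end

open CauchyASV in
/-- Optimization of the Cauchy-sensing-noise asymptotic variance
`f(ω) = ((a+1) e^{2γω} - 1) / (2ω²)`: there is a unique `ω* > 0` solving
`(a+1)(γω-1)e^{2γω} + 1 = 0`, it is the unique global minimizer of `f` on
`(0, ∞)`, `f` is strictly decreasing on `(0, ω*]`, and for any `θ_R > 0` the
minimizer of `f` over `(0, 2π/θ_R]` is `min (2π/θ_R) ω*`. -/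
theorem cauchy_asv_optimal_omega
    (a γ : ℝ) (ha : 0 < a) (hγ : 0 < γ)
    (f : ℝ → ℝ)
    (hf : ∀ ω, f ω = ((a + 1) * Real.exp (2 * γ * ω) - 1) / (2 * ω ^ 2)) :
    ∃ ωs : ℝ, 0 < ωs ∧
      ((a + 1) * (γ * ωs - 1) * Real.exp (2 * γ * ωs) + 1 = 0) ∧
      (∀ ω > (0 : ℝ), (a + 1) * (γ * ω - 1) * Real.exp (2 * γ * ω) + 1 = 0 → ω = ωs) ∧
      (∀ ω > (0 : ℝ), ω ≠ ωs → f ωs < f ω) ∧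
      StrictAntiOn f (Set.Ioc 0 ωs) ∧
      ∀ θR : ℝ, 0 < θR →
        min (2 * Real.pi / θR) ωs ∈ Set.Ioc 0 (2 * Real.pi / θR) ∧
        ∀ ω ∈ Set.Ioc 0 (2 * Real.pi / θR),
          f (min (2 * Real.pi / θR) ωs) ≤ f ω := by
  obtain rfl : f = asv (a + 1) γ := funext hf
  obtain ⟨s, hs, hroot, hneg, hpos⟩ := exists_stationarity_root (by linarith : 1 < a + 1) hγ
  have hanti := asv_strictAntiOn (c := a + 1) fun ω hω => hneg ω ⟨hω.1.le, hω.2⟩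
  have hmono := asv_strictMonoOn (c := a + 1) hs hpos
  have hmin : ∀ ω > (0 : ℝ), ω ≠ s → asv (a + 1) γ s < asv (a + 1) γ ω := fun ω hω hne =>
    hne.lt_or_gt.elim (fun h => hanti ⟨hω, h.le⟩ ⟨hs, le_rfl⟩ h)
      (fun h => hmono self_mem_Ici h.le h)
  refine ⟨s, hs, hroot, fun ω hω hzero => ?_, hmin, hanti, fun θR hθR =>
    ⟨⟨lt_min (by positivity) hs, min_le_left _ _⟩, ?_⟩⟩
  · by_contra hne
    rcases lt_or_gt_of_ne hne with h | h
    · exact (hneg ω ⟨hω.le, h⟩).ne hzero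
    · exact (hpos ω h).ne' hzero
  · have hglobal : IsMinOn (asv (a + 1) γ) (Ioi 0) s := isMinOn_iff.mpr fun ω hω => by
      rcases eq_or_ne ω s with rfl | hne
      exacts [le_rfl, (hmin ω hω hne).le]
    exact isMinOn_Ioc_min_of_antitoneOn hglobal hanti.antitoneOn _
end

section
/- Let a > 0 and define F(β) = ( (1 + β)² / (2β) )·( a + 4β/(1 + 4β) ) for β > 0 (the asymptotic variance for Laplace sensing noise after the substitution β = b²ω², up to the factor b²). Then F has a unique stationary point β* on (0, ∞), β* is the unique global minimizer of F on (0, ∞), and β* = (1/12)·( c/(a + 1) + (25a + 4)/c + 2 ), where c = ( 125a³ + 258a² + 141a + 3√3·√( a·(a + 1)³·(375a + 32) ) + 8 )^{1/3}. -/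
open Set

/-!
Up to a positive factor, `F'(β)` is `(β + 1) P(β)` with the cubic
`P(β) = 16(a+1)β³ - 8(a+1)β² - 7aβ - a`. The substitution `t = (a+1)(12β - 2)` turns `P = 0` into
the depressed cubic `t³ = 3mt + 2S` with `m = (25a+4)(a+1)`, `S = (125a+8)(a+1)²`, whose Cardano
root is `t = c + m/c`; this is the closed form of `β*`. AM-GM gives `t > 4(a+1)`, i.e. `β* > 1/2`,
and a root `r > 1/2` of `P` factors it as `(β - r) q(β)` with `q > 0` on `[0, ∞)`. So `F' < 0` on
`(0, β*)` and `F' > 0` on `(β*, ∞)`.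
-/

theorem cardano_add_div_cube {K : Type*} [Field K] {c S k m : K} (hc : c ≠ 0)
    (hc3 : c ^ 3 = S + k) (hm : (S + k) * (S - k) = m ^ 3) :
    (c + m / c) ^ 3 = 3 * m * (c + m / c) + 2 * S := by
  have hmc : (m / c) ^ 3 = S - k := by
    rw [div_pow, div_eq_iff (pow_ne_zero 3 hc), hc3, ← hm]
    ring
  linear_combination hc3 + hmc + 3 * (c + m / c) * mul_div_cancel₀ m hc

theorem lt_of_deriv_neg_of_deriv_pos {f : ℝ → ℝ} {l r x : ℝ} (hlr : l < r)
    (hf : ContinuousOn f (Ioi l)) (hneg : ∀ y ∈ Ioo l r, deriv f y < 0)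
    (hpos : ∀ y ∈ Ioi r, 0 < deriv f y) (hx : l < x) (hxr : x ≠ r) : f r < f x := by
  rcases hxr.lt_or_gt with hxr | hrx
  · have hanti : StrictAntiOn f (Icc x r) :=
      strictAntiOn_of_deriv_neg (convex_Icc x r) (hf.mono fun y hy => hx.trans_le hy.1)
        fun y hy => hneg y ⟨hx.trans (interior_Icc.subset hy).1, (interior_Icc.subset hy).2⟩
    exact hanti (left_mem_Icc.2 hxr.le) (right_mem_Icc.2 hxr.le) hxr
  · have hmono : StrictMonoOn f (Icc r x) :=
      strictMonoOn_of_deriv_pos (convex_Icc r x) (hf.mono fun y hy => hlr.trans_le hy.1)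
        fun y hy => hpos y (interior_Icc.subset hy).1
    exact hmono (left_mem_Icc.2 hrx.le) (right_mem_Icc.2 hrx.le) hrx

noncomputable def laplaceAsv (a β : ℝ) : ℝ :=
  (1 + β) ^ 2 / (2 * β) * (a + 4 * β / (1 + 4 * β))

def stationaryCubic (a β : ℝ) : ℝ :=
  16 * (a + 1) * β ^ 3 - 8 * (a + 1) * β ^ 2 - 7 * a * β - a

noncomputable def cardanoBeta (a c : ℝ) : ℝ :=
  (1 / 12) * (c / (a + 1) + (25 * a + 4) / c + 2)

theorem hasDerivAt_laplaceAsv (a : ℝ) {β : ℝ} (hβ : β ≠ 0) (hβ' : 1 + 4 * β ≠ 0) :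
    HasDerivAt (laplaceAsv a)
      ((β + 1) * stationaryCubic a β / (2 * β ^ 2 * (1 + 4 * β) ^ 2)) β := by
  have hlin : ∀ k : ℝ, HasDerivAt (fun b : ℝ => k * b) k β := fun k => by
    simpa using (hasDerivAt_id β).const_mul k
  have h := ((((hasDerivAt_id β).const_add 1).pow 2).div (hlin 2)
    (mul_ne_zero two_ne_zero hβ)).mul (((hlin 4).div ((hlin 4).const_add 1) hβ').const_add a)
  refine h.congr_deriv ?_
  simp only [stationaryCubic, id, Pi.div_apply, Pi.pow_apply]
  have : 1 + β * 4 ≠ 0 := by rwa [mul_comm]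
  field_simp
  ring

theorem stationaryCubic_eq_sub_mul_pos {a r β : ℝ} (ha : 0 < a) (hr : 1 / 2 < r)
    (hroot : stationaryCubic a r = 0) (hβ : 0 ≤ β) :
    ∃ q > 0, stationaryCubic a β = (β - r) * q := by
  unfold stationaryCubic at hroot ⊢
  have hq₀ : 0 < 16 * (a + 1) * r ^ 2 - 8 * (a + 1) * r - 7 * a := by nlinarith
  have hq₁ : 0 ≤ 8 * (a + 1) * (2 * r - 1) * β := by
    have : 0 < 2 * r - 1 := by linarith
    positivity
  refine ⟨16 * (a + 1) * β ^ 2 + 8 * (a + 1) * (2 * r - 1) * β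
    + (16 * (a + 1) * r ^ 2 - 8 * (a + 1) * r - 7 * a), by positivity, ?_⟩
  linear_combination hroot

theorem deriv_laplaceAsv_eq_sub_mul_pos {a r β : ℝ} (ha : 0 < a) (hr : 1 / 2 < r)
    (hroot : stationaryCubic a r = 0) (hβ : 0 < β) :
    ∃ k > 0, deriv (laplaceAsv a) β = (β - r) * k := by
  obtain ⟨q, hq, hPq⟩ := stationaryCubic_eq_sub_mul_pos ha hr hroot hβ.le
  refine ⟨(β + 1) * q / (2 * β ^ 2 * (1 + 4 * β) ^ 2), by positivity, ?_⟩
  rw [(hasDerivAt_laplaceAsv a hβ.ne' (by positivity)).deriv, hPq]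
  ring

theorem stationaryCubic_cardanoBeta {a c k : ℝ} (ha : a + 1 ≠ 0) (hc : c ≠ 0)
    (hk : k ^ 2 = 27 * a * (a + 1) ^ 3 * (375 * a + 32))
    (hc3 : c ^ 3 = (125 * a + 8) * (a + 1) ^ 2 + k) :
    stationaryCubic a (cardanoBeta a c) = 0 := by
  have ht := cardano_add_div_cube (m := (25 * a + 4) * (a + 1)) hc hc3
    (by linear_combination -hk)
  have hsplit : c / (a + 1) + (25 * a + 4) / c
      = (c + (25 * a + 4) * (a + 1) / c) / (a + 1) := by
    field_simp
  rw [cardanoBeta, hsplit]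
  generalize c + (25 * a + 4) * (a + 1) / c = t at ht
  unfold stationaryCubic
  field_simp
  linear_combination 16 * ht

theorem half_lt_cardanoBeta {a c : ℝ} (ha : 0 < a) (hc : 0 < c) : 1 / 2 < cardanoBeta a c := by
  have ha₁ : 0 < a + 1 := by linarith
  have hsum : 4 < c / (a + 1) + (25 * a + 4) / c := by
    rw [div_add_div _ _ ha₁.ne' hc.ne', lt_div_iff₀ (mul_pos ha₁ hc)]
    nlinarith [sq_nonneg (c - 2 * (a + 1)), mul_pos ha ha₁]
  rw [cardanoBeta]
  linarith

/-- Optimization of the Laplace-sensing-noise asymptotic variance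
`F(β) = ((1+β)²/(2β)) (a + 4β/(1+4β))` (with `β = b²ω²`): `F` has a unique
stationary point `β*` on `(0, ∞)`, which is its unique global minimizer and is
given in closed form by `β* = (1/12)(c/(a+1) + (25a+4)/c + 2)` with
`c = (125a³ + 258a² + 141a + 3√3 √(a(a+1)³(375a+32)) + 8)^{1/3}`. -/
theorem laplace_asv_optimal_beta
    (a : ℝ) (ha : 0 < a)
    (F : ℝ → ℝ)
    (hF : ∀ β, F β = (1 + β) ^ 2 / (2 * β) * (a + 4 * β / (1 + 4 * β)))
    (c : ℝ)
    (hc : c = (125 * a ^ 3 + 258 * a ^ 2 + 141 * a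
        + 3 * Real.sqrt 3 * Real.sqrt (a * (a + 1) ^ 3 * (375 * a + 32)) + 8)
        ^ ((1 : ℝ) / 3))
    (βs : ℝ)
    (hβs : βs = (1 / 12) * (c / (a + 1) + (25 * a + 4) / c + 2)) :
    0 < βs ∧
    deriv F βs = 0 ∧
    (∀ β > (0 : ℝ), deriv F β = 0 → β = βs) ∧
    (∀ β > (0 : ℝ), β ≠ βs → F βs < F β) := by
  obtain rfl : F = laplaceAsv a := funext hF
  obtain rfl : βs = cardanoBeta a c := hβs
  set δ := 3 * Real.sqrt 3 * Real.sqrt (a * (a + 1) ^ 3 * (375 * a + 32))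
  have hδ : δ ^ 2 = 27 * a * (a + 1) ^ 3 * (375 * a + 32) := by
    rw [mul_pow, mul_pow, Real.sq_sqrt (by norm_num), Real.sq_sqrt (by positivity)]
    ring
  have hS : 0 < 125 * a ^ 3 + 258 * a ^ 2 + 141 * a + δ + 8 := by positivity
  have hc₀ : 0 < c := hc ▸ Real.rpow_pos_of_pos hS _
  have hc3 : c ^ 3 = (125 * a + 8) * (a + 1) ^ 2 + δ := by
    rw [hc, ← Real.rpow_natCast, ← Real.rpow_mul hS.le]
    norm_num
    ring
  have hhalf := half_lt_cardanoBeta ha hc₀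
  have hroot := stationaryCubic_cardanoBeta (by positivity) hc₀.ne' hδ hc3
  have hsign β (hβ : 0 < β) := deriv_laplaceAsv_eq_sub_mul_pos ha hhalf hroot hβ
  have hβs₀ : 0 < cardanoBeta a c := by linarith
  refine ⟨hβs₀, ?_, fun β hβ hd => ?_, fun β hβ hne => ?_⟩
  · obtain ⟨k, -, hk⟩ := hsign _ hβs₀
    simpa using hk
  · obtain ⟨k, hk, hdk⟩ := hsign β hβ
    rw [hdk] at hd
    exact sub_eq_zero.1 ((mul_eq_zero.1 hd).resolve_right hk.ne')
  refine lt_of_deriv_neg_of_deriv_pos hβs₀ (fun y (hy : 0 < y) => ?_) (fun y hy => ?_)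
    (fun y hy => ?_) hβ hne
  · exact (hasDerivAt_laplaceAsv a hy.ne' (by positivity)).continuousAt.continuousWithinAt
  · obtain ⟨k, hk, hdk⟩ := hsign y hy.1
    exact hdk ▸ mul_neg_of_neg_of_pos (sub_neg.2 hy.2) hk
  · obtain ⟨k, hk, hdk⟩ := hsign y (hβs₀.trans hy)
    exact hdk ▸ mul_pos (sub_pos.2 hy) hk
end

section
/- Let a₀ > 0, r ≥ 0, and define f(ω) = ( a₀² / (2·sin²(ωa₀)) )·( r + 1 − sin(2ωa₀)/(2ωa₀) ) for ω > 0 with sin(ωa₀) ≠ 0 (the asymptotic variance for uniform sensing noise on [−a₀, a₀]). Then for every ω > 0 with sin(ωa₀) ≠ 0 and sin(2ωa₀) ≥ 0, and every positive integer k, one has f(ω) ≤ f(ω + kπ/a₀). -/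
open Filter Topology Set

/-- For uniform sensing noise on `[-a₀, a₀]`, the asymptotic variance
`f(ω) = (a₀²/(2 sin²(ω a₀))) (r + 1 - sin(2 ω a₀)/(2 ω a₀))` satisfies
`f(ω) ≤ f(ω + k π / a₀)` for every `ω > 0` with `sin(ω a₀) ≠ 0` and
`sin(2 ω a₀) ≥ 0` and every positive integer `k`. -/
theorem uniform_asv_period_comparison
    (a0 r : ℝ) (ha0 : 0 < a0) (hr : 0 ≤ r)
    (f : ℝ → ℝ)
    (hf : ∀ ω, f ω = a0 ^ 2 / (2 * Real.sin (ω * a0) ^ 2)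
        * (r + 1 - Real.sin (2 * ω * a0) / (2 * ω * a0))) :
    ∀ ω > (0 : ℝ), Real.sin (ω * a0) ≠ 0 → 0 ≤ Real.sin (2 * ω * a0) →
      ∀ k : ℕ, 0 < k → f ω ≤ f (ω + k * Real.pi / a0) := by
  intro ω hω hsin hsin2 k hk
  have ha0' : a0 ≠ 0 := ha0.ne'
  have hπ := Real.pi_pos
  have hω' : 0 < ω + k * Real.pi / a0 := by positivity
  have h1 : (ω + k * Real.pi / a0) * a0 = ω * a0 + (k : ℤ) * Real.pi := by
    push_cast; field_simp
  have h2 : 2 * (ω + k * Real.pi / a0) * a0 = 2 * ω * a0 + (k : ℤ) * (2 * Real.pi) := by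
    push_cast; field_simp
  have hsin' : Real.sin ((ω + k * Real.pi / a0) * a0) ^ 2 = Real.sin (ω * a0) ^ 2 := by
    rw [h1, Real.sin_add_int_mul_pi, mul_pow]
    have h0 : ((-1 : ℝ) ^ (k : ℤ)) ^ 2 = 1 := by
      rw [← zpow_natCast ((-1 : ℝ) ^ (k : ℤ)) 2, ← zpow_mul, mul_comm, zpow_mul]
      norm_num
    rw [h0, one_mul]
  have hsin2' : Real.sin (2 * (ω + k * Real.pi / a0) * a0) = Real.sin (2 * ω * a0) := by
    rw [h2, Real.sin_add_int_mul_two_pi]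
  rw [hf, hf, hsin', hsin2']
  have hC : 0 ≤ a0 ^ 2 / (2 * Real.sin (ω * a0) ^ 2) := by positivity
  apply mul_le_mul_of_nonneg_left _ hC
  have hden : 2 * ω * a0 ≤ 2 * (ω + k * Real.pi / a0) * a0 := by
    have : 0 ≤ (k : ℝ) * Real.pi / a0 := by positivity
    nlinarith
  gcongr
  all_goals first
    | exact hsin2
    | positivity
end

section
/- Let a > 0. The equation ( 8·(a + 1)·β² − 1 )·cos β + cos(3β) − 4β·sin β = 0 has a unique solution β* in the interval (0, π), and β* is the unique global minimizer over β ∈ (0, π) of the function G(β) = ( a + 1 − sin(2β)/(2β) ) / ( 2·sin²β ); moreover G is strictly decreasing on (0, β*]. -/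
/-
Writing `F(β) = (8(a+1)β² - 1) cos β + cos 3β - 4β sin β`, one computes
`G'(β) = -F(β) / (8 β² sin³ β)` on `(0, π)`, so everything reduces to the sign of `F`.
On `[π/2, π)` both terms of `F = cos β (8(a+1)β² - 4 + 4 cos² β) - 4β sin β` are negative.
On `(0, π/2)` we have `F = 4β² cos β · m(β)` with
`m(β) = 2(a+1) - sinc² β - sinc β / cos β`; `m` extends continuously to `m(0) = 2a > 0`,
tends to `-∞` at `π/2`, and is strictly decreasing because the numerator of `-m'` equals
`R(4β) / 16` with `R(u) = u² + u sin u + 4 cos u - 4`, which is positive on `(0, 2π)` since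
`R(0) = R'(0) = 0` and `R''(u) = 4 sin(u/2) (sin(u/2) - (u/2) cos(u/2)) > 0`.
Hence `F` has exactly one zero `β*`, positive before it and negative after it.
-/

open Set Real

lemma pos_of_hasDerivAt_pos {f f' : ℝ → ℝ} {c b x : ℝ} (hf : ∀ y, HasDerivAt f (f' y) y)
    (hc : f c = 0) (hf' : ∀ y ∈ Ioo c b, 0 < f' y) (hx : x ∈ Ioc c b) : 0 < f x := by
  have hmono : StrictMonoOn f (Icc c b) :=
    strictMonoOn_of_hasDerivWithinAt_pos (convex_Icc c b)
      (fun y _ => (hf y).continuousAt.continuousWithinAt) (fun y _ => (hf y).hasDerivWithinAt)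
      (by simpa using hf')
  simpa [hc] using hmono (left_mem_Icc.2 (hx.1.le.trans hx.2)) (Ioc_subset_Icc_self hx) hx.1

lemma sin_sub_mul_cos_pos {t : ℝ} (ht : t ∈ Ioo 0 π) : 0 < sin t - t * cos t :=
  pos_of_hasDerivAt_pos (f := fun x => sin x - x * cos x) (f' := fun x => x * sin x)
    (fun x => ((hasDerivAt_sin x).sub ((hasDerivAt_id' x).mul (hasDerivAt_cos x))).congr_deriv
      (by ring))
    (by simp) (fun x hx => mul_pos hx.1 (sin_pos_of_pos_of_lt_pi hx.1 hx.2))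
    (Ioo_subset_Ioc_self ht)

lemma two_sub_two_mul_cos_sub_mul_sin_pos {u : ℝ} (hu : u ∈ Ioo 0 (2 * π)) :
    0 < 2 - 2 * cos u - u * sin u := by
  obtain ⟨t, rfl⟩ : ∃ t, u = 2 * t := ⟨u / 2, by ring⟩
  have ht : t ∈ Ioo 0 π := ⟨by linarith [hu.1], by linarith [hu.2]⟩
  have half_angle : 2 - 2 * cos (2 * t) - 2 * t * sin (2 * t)
      = 4 * sin t * (sin t - t * cos t) := by
    rw [cos_two_mul, sin_two_mul]
    linear_combination (-4) * sin_sq_add_cos_sq t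
  rw [half_angle]
  exact mul_pos (mul_pos four_pos (sin_pos_of_pos_of_lt_pi ht.1 ht.2)) (sin_sub_mul_cos_pos ht)

lemma two_mul_sub_three_mul_sin_add_mul_cos_pos {u : ℝ} (hu : u ∈ Ioo 0 (2 * π)) :
    0 < 2 * u - 3 * sin u + u * cos u :=
  pos_of_hasDerivAt_pos (f := fun x => 2 * x - 3 * sin x + x * cos x)
    (f' := fun x => 2 - 2 * cos x - x * sin x)
    (fun x => ((((hasDerivAt_id' x).const_mul 2).sub ((hasDerivAt_sin x).const_mul 3)).add
      ((hasDerivAt_id' x).mul (hasDerivAt_cos x))).congr_deriv (by ring))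
    (by simp) (fun _ => two_sub_two_mul_cos_sub_mul_sin_pos) (Ioo_subset_Ioc_self hu)

lemma sq_add_mul_sin_add_four_mul_cos_sub_four_pos {u : ℝ} (hu : u ∈ Ioo 0 (2 * π)) :
    0 < u ^ 2 + u * sin u + 4 * cos u - 4 :=
  pos_of_hasDerivAt_pos (f := fun x => x ^ 2 + x * sin x + 4 * cos x - 4)
    (f' := fun x => 2 * x - 3 * sin x + x * cos x)
    (fun x => ((((hasDerivAt_pow 2 x).add ((hasDerivAt_id' x).mul (hasDerivAt_sin x))).add
      ((hasDerivAt_cos x).const_mul 4)).sub_const 4).congr_deriv (by ring))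
    (by simp) (fun _ => two_mul_sub_three_mul_sin_add_mul_cos_pos) (Ioo_subset_Ioc_self hu)

lemma Real.hasDerivAt_sinc {x : ℝ} (hx : x ≠ 0) :
    HasDerivAt sinc ((x * cos x - sin x) / x ^ 2) x := by
  have h := (hasDerivAt_sin x).div (hasDerivAt_id x) hx
  simp only [id_eq, mul_one, mul_comm (cos x)] at h
  refine h.congr_of_eventuallyEq ?_
  filter_upwards [isOpen_ne.mem_nhds hx] with y hy
  exact sinc_of_ne_zero hy

noncomputable def asvStationarity (a β : ℝ) : ℝ :=
  (8 * (a + 1) * β ^ 2 - 1) * cos β + cos (3 * β) - 4 * β * sin β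

noncomputable def asvStationarityRatio (a β : ℝ) : ℝ :=
  2 * (a + 1) - sinc β ^ 2 - sinc β / cos β

lemma asvStationarity_eq_mul_asvStationarityRatio (a : ℝ) {β : ℝ} (hβ : β ≠ 0) (hc : cos β ≠ 0) :
    asvStationarity a β = 4 * β ^ 2 * cos β * asvStationarityRatio a β := by
  rw [asvStationarity, asvStationarityRatio, sinc_of_ne_zero hβ, cos_three_mul]
  field_simp
  linear_combination 4 * cos β * sin_sq_add_cos_sq β

lemma hasDerivAt_asvStationarityRatio (a : ℝ) {β : ℝ} (hβ : β ≠ 0) (hc : cos β ≠ 0) :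
    HasDerivAt (asvStationarityRatio a)
      (-(β ^ 2 + β * sin β * cos β * (1 - 2 * sin β ^ 2) - 2 * sin β ^ 2 * cos β ^ 2)
        / (β ^ 3 * cos β ^ 2)) β := by
  have hs := hasDerivAt_sinc hβ
  refine (((hasDerivAt_const β (2 * (a + 1))).sub (hs.pow 2)).sub
    (hs.div (hasDerivAt_cos β) hc)).congr_deriv ?_
  norm_num only [Nat.cast_ofNat]
  rw [sinc_of_ne_zero hβ]
  field_simp
  linear_combination (-β ^ 2 - 2 * β * sin β * cos β) * sin_sq_add_cos_sq β

lemma asvStationarityRatio_deriv_numerator_pos {β : ℝ} (hβ : β ∈ Ioo 0 (π / 2)) :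
    0 < β ^ 2 + β * sin β * cos β * (1 - 2 * sin β ^ 2) - 2 * sin β ^ 2 * cos β ^ 2 := by
  have h := sq_add_mul_sin_add_four_mul_cos_sub_four_pos (u := 4 * β)
    ⟨by linarith [hβ.1], by linarith [hβ.2]⟩
  have hsin : sin (4 * β) = 4 * sin β * cos β * (1 - 2 * sin β ^ 2) := by
    rw [show 4 * β = 2 * (2 * β) by ring, sin_two_mul, sin_two_mul, cos_two_mul]
    linear_combination 8 * sin β * cos β * sin_sq_add_cos_sq β
  have hcos : cos (4 * β) = 1 - 8 * sin β ^ 2 * cos β ^ 2 := by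
    rw [show 4 * β = 2 * (2 * β) by ring, cos_two_mul, cos_two_mul]
    linear_combination 8 * cos β ^ 2 * sin_sq_add_cos_sq β
  rw [hsin, hcos] at h
  linear_combination h / 16

lemma continuousOn_asvStationarityRatio (a : ℝ) :
    ContinuousOn (asvStationarityRatio a) (Ico 0 (π / 2)) := fun x hx =>
  have hc : cos x ≠ 0 := (cos_pos_of_mem_Ioo ⟨by linarith [hx.1, pi_pos], hx.2⟩).ne'
  ((continuousAt_const.sub (continuous_sinc.continuousAt.pow 2)).sub
    (continuous_sinc.continuousAt.div continuous_cos.continuousAt hc)).continuousWithinAt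

lemma strictAntiOn_asvStationarityRatio (a : ℝ) :
    StrictAntiOn (asvStationarityRatio a) (Ico 0 (π / 2)) := by
  refine strictAntiOn_of_deriv_neg (convex_Ico 0 (π / 2))
    (continuousOn_asvStationarityRatio a) fun β hβ => ?_
  rw [interior_Ico] at hβ
  have hc : 0 < cos β := cos_pos_of_mem_Ioo ⟨by linarith [hβ.1, pi_pos], hβ.2⟩
  rw [(hasDerivAt_asvStationarityRatio a hβ.1.ne' hc.ne').deriv]
  exact div_neg_of_neg_of_pos (neg_neg_of_pos (asvStationarityRatio_deriv_numerator_pos hβ))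
    (mul_pos (pow_pos hβ.1 3) (pow_pos hc 2))

lemma exists_asvStationarityRatio_eq_zero {a : ℝ} (ha : 0 < a) :
    ∃ βs ∈ Ioo 0 (π / 2), asvStationarityRatio a βs = 0 := by
  set β₁ := arctan (π * (a + 1) + 1)
  have hβ₁ : β₁ ∈ Ioo 0 (π / 2) :=
    ⟨arctan_pos.2 (by positivity), arctan_lt_pi_div_two _⟩
  have hc : 0 < cos β₁ := cos_pos_of_mem_Ioo ⟨by linarith [hβ₁.1, pi_pos], hβ₁.2⟩
  have h_at_zero : asvStationarityRatio a 0 = 2 * a := by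
    simp only [asvStationarityRatio, sinc_zero, cos_zero]; ring
  have h_at_β₁ : asvStationarityRatio a β₁ < 0 := by
    have htan : 2 * (a + 1) * β₁ < tan β₁ := by
      rw [tan_arctan]; nlinarith [hβ₁.2]
    have hquot : sinc β₁ / cos β₁ = tan β₁ / β₁ := by
      rw [sinc_of_ne_zero hβ₁.1.ne', tan_eq_sin_div_cos]; ring
    have : 2 * (a + 1) < tan β₁ / β₁ := (lt_div_iff₀ hβ₁.1).2 htan
    rw [asvStationarityRatio, hquot]
    nlinarith [sq_nonneg (sinc β₁)]
  obtain ⟨βs, hβs, hzero⟩ := intermediate_value_Icc' hβ₁.1.le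
    ((continuousOn_asvStationarityRatio a).mono (Icc_subset_Ico_right hβ₁.2))
    ⟨h_at_β₁.le, by rw [h_at_zero]; linarith⟩
  have hβs0 : βs ≠ 0 := by rintro rfl; linarith [h_at_zero.symm.trans hzero]
  exact ⟨βs, ⟨lt_of_le_of_ne hβs.1 (Ne.symm hβs0), hβs.2.trans_lt hβ₁.2⟩, hzero⟩

lemma asvStationarity_neg_of_pi_div_two_le {a β : ℝ} (ha : 0 ≤ a) (hβ₁ : π / 2 ≤ β)
    (hβ₂ : β < π) : asvStationarity a β < 0 := by
  have hc : cos β ≤ 0 := cos_nonpos_of_pi_div_two_le_of_le hβ₁ (by linarith [pi_pos])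
  have hs : 0 < sin β := sin_pos_of_pos_of_lt_pi (by linarith [pi_pos]) hβ₂
  have hβ : 3 / 2 < β := by linarith [pi_gt_three]
  have hfactor : 0 ≤ 8 * (a + 1) * β ^ 2 - 4 + 4 * cos β ^ 2 := by nlinarith
  have hrewrite : asvStationarity a β
      = cos β * (8 * (a + 1) * β ^ 2 - 4 + 4 * cos β ^ 2) - 4 * β * sin β := by
    rw [asvStationarity, cos_three_mul]; ring
  rw [hrewrite]
  nlinarith [mul_nonpos_of_nonpos_of_nonneg hc hfactor, mul_pos (by linarith : 0 < β) hs]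

lemma asvStationarity_pos_of_lt {a βs β : ℝ} (hβs : βs ∈ Ioo 0 (π / 2))
    (hzero : asvStationarityRatio a βs = 0) (hβ : β ∈ Ioo 0 βs) : 0 < asvStationarity a β := by
  have hβ' : β ∈ Ioo 0 (π / 2) := ⟨hβ.1, hβ.2.trans hβs.2⟩
  have hc : 0 < cos β := cos_pos_of_mem_Ioo ⟨by linarith [hβ.1, pi_pos], hβ'.2⟩
  have hratio : 0 < asvStationarityRatio a β := hzero ▸
    strictAntiOn_asvStationarityRatio a (Ioo_subset_Ico_self hβ') (Ioo_subset_Ico_self hβs) hβ.2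
  rw [asvStationarity_eq_mul_asvStationarityRatio a hβ.1.ne' hc.ne']
  have hβ0 : 0 < β := hβ.1
  positivity

lemma asvStationarity_neg_of_gt {a βs β : ℝ} (ha : 0 ≤ a) (hβs : βs ∈ Ioo 0 (π / 2))
    (hzero : asvStationarityRatio a βs = 0) (hβ : β ∈ Ioo βs π) : asvStationarity a β < 0 := by
  rcases lt_or_ge β (π / 2) with hβ₂ | hβ₂
  · have hβ0 : 0 < β := hβs.1.trans hβ.1
    have hc : 0 < cos β := cos_pos_of_mem_Ioo ⟨by linarith [pi_pos], hβ₂⟩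
    have hratio : asvStationarityRatio a β < 0 := hzero ▸
      strictAntiOn_asvStationarityRatio a (Ioo_subset_Ico_self hβs) ⟨hβ0.le, hβ₂⟩ hβ.1
    rw [asvStationarity_eq_mul_asvStationarityRatio a hβ0.ne' hc.ne']
    exact mul_neg_of_pos_of_neg (by positivity) hratio
  · exact asvStationarity_neg_of_pi_div_two_le ha hβ₂ hβ.2

noncomputable def uniformAsv (a β : ℝ) : ℝ :=
  (a + 1 - sin (2 * β) / (2 * β)) / (2 * sin β ^ 2)

lemma hasDerivAt_uniformAsv (a : ℝ) {β : ℝ} (hβ : β ∈ Ioo 0 π) :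
    HasDerivAt (uniformAsv a) (-asvStationarity a β / (8 * β ^ 2 * sin β ^ 3)) β := by
  have hβ0 : β ≠ 0 := hβ.1.ne'
  have hs : sin β ≠ 0 := (sin_pos_of_pos_of_lt_pi hβ.1 hβ.2).ne'
  have hlin : HasDerivAt (fun x : ℝ => 2 * x) 2 β := by
    simpa using (hasDerivAt_id' β).const_mul 2
  have hnum := (hasDerivAt_const β (a + 1)).sub (hlin.sin.div hlin (mul_ne_zero two_ne_zero hβ0))
  have hden := ((hasDerivAt_sin β).pow 2).const_mul 2
  refine (hnum.div hden (mul_ne_zero two_ne_zero (pow_ne_zero 2 hs))).congr_deriv ?_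
  norm_num only [Nat.cast_ofNat, Pi.pow_apply, Pi.sub_apply, Pi.div_apply]
  rw [asvStationarity, cos_three_mul, sin_two_mul, cos_two_mul]
  field_simp
  linear_combination 8 * cos β * sin_sq_add_cos_sq β

lemma strictAntiOn_uniformAsv {a βs : ℝ} (hβs : βs < π)
    (hF : ∀ β ∈ Ioo 0 βs, 0 < asvStationarity a β) : StrictAntiOn (uniformAsv a) (Ioc 0 βs) := by
  have hsub : Ioc 0 βs ⊆ Ioo 0 π := fun β hβ => ⟨hβ.1, hβ.2.trans_lt hβs⟩
  refine strictAntiOn_of_deriv_neg (convex_Ioc 0 βs)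
    (fun β hβ => (hasDerivAt_uniformAsv a (hsub hβ)).continuousAt.continuousWithinAt)
    fun β hβ => ?_
  rw [interior_Ioc] at hβ
  have hβ' := hsub (Ioo_subset_Ioc_self hβ)
  have hβ0 : 0 < β := hβ'.1
  have hsin : 0 < sin β := sin_pos_of_pos_of_lt_pi hβ'.1 hβ'.2
  rw [(hasDerivAt_uniformAsv a hβ').deriv]
  exact div_neg_of_neg_of_pos (neg_neg_of_pos (hF β hβ)) (by positivity)

lemma strictMonoOn_uniformAsv {a βs : ℝ} (hβs : 0 < βs)
    (hF : ∀ β ∈ Ioo βs π, asvStationarity a β < 0) : StrictMonoOn (uniformAsv a) (Ico βs π) := by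
  have hsub : Ico βs π ⊆ Ioo 0 π := fun β hβ => ⟨hβs.trans_le hβ.1, hβ.2⟩
  refine strictMonoOn_of_deriv_pos (convex_Ico βs π)
    (fun β hβ => (hasDerivAt_uniformAsv a (hsub hβ)).continuousAt.continuousWithinAt)
    fun β hβ => ?_
  rw [interior_Ico] at hβ
  have hβ' := hsub (Ioo_subset_Ico_self hβ)
  have hβ0 : 0 < β := hβ'.1
  have hsin : 0 < sin β := sin_pos_of_pos_of_lt_pi hβ'.1 hβ'.2
  rw [(hasDerivAt_uniformAsv a hβ').deriv]
  exact div_pos (neg_pos_of_neg (hF β hβ)) (by positivity)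

/-- Optimization of the uniform-sensing-noise asymptotic variance
`G(β) = (a + 1 - sin(2β)/(2β)) / (2 sin²β)` on `(0, π)`: the stationarity
equation `(8(a+1)β² - 1) cos β + cos(3β) - 4β sin β = 0` has a unique solution
`β*` in `(0, π)`, which is the unique global minimizer of `G` on `(0, π)`, and
`G` is strictly decreasing on `(0, β*]`. -/
theorem uniform_asv_optimal_beta
    (a : ℝ) (ha : 0 < a)
    (G : ℝ → ℝ)
    (hG : ∀ β, G β = (a + 1 - Real.sin (2 * β) / (2 * β))
        / (2 * Real.sin β ^ 2)) :
    ∃ βs ∈ Set.Ioo (0 : ℝ) Real.pi,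
      ((8 * (a + 1) * βs ^ 2 - 1) * Real.cos βs + Real.cos (3 * βs)
          - 4 * βs * Real.sin βs = 0) ∧
      (∀ β ∈ Set.Ioo (0 : ℝ) Real.pi,
        (8 * (a + 1) * β ^ 2 - 1) * Real.cos β + Real.cos (3 * β)
          - 4 * β * Real.sin β = 0 → β = βs) ∧
      (∀ β ∈ Set.Ioo (0 : ℝ) Real.pi, β ≠ βs → G βs < G β) ∧
      StrictAntiOn G (Set.Ioc 0 βs) := by
  obtain rfl : G = uniformAsv a := funext hG
  obtain ⟨βs, hβs, hzero⟩ := exists_asvStationarityRatio_eq_zero ha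
  have hβsπ : βs < π := hβs.2.trans (half_lt_self pi_pos)
  have hpos : ∀ β ∈ Ioo 0 βs, 0 < asvStationarity a β :=
    fun β hβ => asvStationarity_pos_of_lt hβs hzero hβ
  have hneg : ∀ β ∈ Ioo βs π, asvStationarity a β < 0 :=
    fun β hβ => asvStationarity_neg_of_gt ha.le hβs hzero hβ
  have hanti := strictAntiOn_uniformAsv hβsπ hpos
  have hmono := strictMonoOn_uniformAsv hβs.1 hneg
  refine ⟨βs, ⟨hβs.1, hβsπ⟩, ?_, fun β hβ hβ0 => ?_, fun β hβ hne => ?_, hanti⟩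
  · show asvStationarity a βs = 0
    rw [asvStationarity_eq_mul_asvStationarityRatio a hβs.1.ne'
      (cos_pos_of_mem_Ioo ⟨by linarith [hβs.1, pi_pos], hβs.2⟩).ne', hzero, mul_zero]
  · rcases lt_trichotomy β βs with h | h | h
    · exact absurd hβ0 (hpos β ⟨hβ.1, h⟩).ne'
    · exact h
    · exact absurd hβ0 (hneg β ⟨h, hβ.2⟩).ne
  · rcases hne.lt_or_gt with h | h
    · exact hanti ⟨hβ.1, h.le⟩ ⟨hβs.1, le_rfl⟩ h
    · exact hmono ⟨le_rfl, hβsπ⟩ ⟨h.le, hβ.2⟩ h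
end

section
/- Let ((h_i, η_i))_{i≥1} be i.i.d. pairs where h_i ≥ 0 is an integrable real random variable independent of η_i, and η_i is a real random variable symmetric about 0 with characteristic function φ_η. Then for every ω ∈ ℝ, (1/L)·∑_{i=1}^L h_i·e^{iωη_i} → E[h₁]·φ_η(ω) almost surely as L → ∞. Consequently, over a fading multiple access channel with received signal y_L = √(P_T/L)·∑_{i=1}^L h_i·e^{iω(θ + η_i)} + v, the normalized output z_L = y_L/√L converges almost surely to e^{iωθ}·√P_T·E[h₁]·φ_η(ω), so fading does not affect the strong consistency of the constant-modulus estimator whenever E[h₁] > 0 and φ_η(ω) ≠ 0. -/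
open MeasureTheory ProbabilityTheory Filter Topology

/-!
Write `X_i = h_i e^{iωη_i}`. Since the pairs `(h_i, η_i)` are i.i.d., so are the `X_i`, and
`‖X_i‖ = |h_i|` makes them integrable; the strong law of large numbers for complex random
variables gives `(1/L) ∑ X_i → E[X_1]` almost surely, and independence of `h_1` and `η_1`
factors `E[X_1] = E[h_1] E[e^{iωη_1}]`. Multiplying by the constant `e^{iωθ} √P_T` preserves
the limit, and the noise term `v/√L` vanishes pointwise.
-/

namespace ProbabilityTheory

variable {Ω β E : Type*} {mΩ : MeasurableSpace Ω} {μ : Measure Ω} [MeasurableSpace β]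
  [NormedAddCommGroup E] [NormedSpace ℝ E] [CompleteSpace E] [MeasurableSpace E] [BorelSpace E]

theorem strong_law_ae_comp (Z : ℕ → Ω → β)
    (hindep : Pairwise (Function.onFun (IndepFun · · μ) Z))
    (hident : ∀ i, IdentDistrib (Z i) (Z 0) μ μ) {g : β → E} (hg : Measurable g)
    (hint : Integrable (fun a => g (Z 0 a)) μ) :
    ∀ᵐ a ∂μ, Tendsto (fun n : ℕ => (n : ℝ)⁻¹ • ∑ i ∈ Finset.range n, g (Z i a)) atTop
      (𝓝 (∫ a, g (Z 0 a) ∂μ)) :=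
  strong_law_ae (fun i a => g (Z i a)) hint (fun _ _ hij => (hindep hij).comp hg hg)
    fun i => (hident i).comp hg

end ProbabilityTheory

/-- `p = (h, η)`: fading amplitude and phase noise of one sensor. -/
noncomputable def sensorSignal (ω : ℝ) (p : ℝ × ℝ) : ℂ :=
  (p.1 : ℂ) * Complex.exp ((ω * p.2 : ℝ) * Complex.I)

@[fun_prop]
theorem measurable_sensorSignal (ω : ℝ) : Measurable (sensorSignal ω) := by
  unfold sensorSignal
  fun_prop

theorem norm_sensorSignal (ω : ℝ) (p : ℝ × ℝ) : ‖sensorSignal ω p‖ = |p.1| := by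
  simp only [sensorSignal, norm_mul, Complex.norm_real, Real.norm_eq_abs,
    Complex.norm_exp_ofReal_mul_I, mul_one]

theorem tendsto_div_sqrt_natCast_atTop (c : ℂ) :
    Tendsto (fun L : ℕ => c / (Real.sqrt L : ℂ)) atTop (𝓝 0) := by
  have hinv : Tendsto (fun L : ℕ => (Real.sqrt L)⁻¹) atTop (𝓝 0) :=
    (Real.tendsto_sqrt_atTop.comp tendsto_natCast_atTop_atTop).inv_tendsto_atTop
  simpa [div_eq_mul_inv] using
    ((Complex.continuous_ofReal.tendsto 0).comp hinv).const_mul c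

theorem fading_does_not_affect_consistency_general
    {Ω : Type*} [MeasureSpace Ω] [IsProbabilityMeasure (ℙ : Measure Ω)]
    (h η : ℕ → Ω → ℝ)
    (hindep : iIndepFun (fun i a => (h i a, η i a)) ℙ)
    (hident : ∀ i, IdentDistrib (fun a => (h i a, η i a))
      (fun a => (h 0 a, η 0 a)) ℙ ℙ)
    (hpair : ∀ i, IndepFun (h i) (η i) ℙ)
    (hint : Integrable (h 0) ℙ)
    (ω : ℝ) :
    (∀ᵐ a ∂ℙ, Tendsto
        (fun L : ℕ => (L : ℂ)⁻¹ * ∑ i ∈ Finset.range L,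
          (h i a : ℂ) * Complex.exp ((ω * η i a : ℝ) * Complex.I))
        atTop
        (𝓝 (((∫ a, h 0 a ∂ℙ : ℝ) : ℂ)
          * ∫ a, Complex.exp ((ω * η 0 a : ℝ) * Complex.I) ∂ℙ))) ∧
    ∀ θ PT : ℝ, 0 < PT → ∀ v : Ω → ℂ,
      ∀ᵐ a ∂ℙ, Tendsto
        (fun L : ℕ => Complex.exp ((ω * θ : ℝ) * Complex.I) * (Real.sqrt PT : ℂ) *
            ((L : ℂ)⁻¹ * ∑ i ∈ Finset.range L,
              (h i a : ℂ) * Complex.exp ((ω * η i a : ℝ) * Complex.I))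
          + v a / (Real.sqrt L : ℂ))
        atTop
        (𝓝 (Complex.exp ((ω * θ : ℝ) * Complex.I) * (Real.sqrt PT : ℂ) *
          (((∫ a, h 0 a ∂ℙ : ℝ) : ℂ)
            * ∫ a, Complex.exp ((ω * η 0 a : ℝ) * Complex.I) ∂ℙ))) := by
  have hZ : AEMeasurable (fun a => (h 0 a, η 0 a)) := (hident 0).aemeasurable_fst
  have hX : Integrable (fun a => sensorSignal ω (h 0 a, η 0 a)) :=
    hint.mono ((measurable_sensorSignal ω).comp_aemeasurable hZ).aestronglyMeasurable
      (ae_of_all _ fun _ => (norm_sensorSignal ω _).le)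
  have hmean : ∫ a, sensorSignal ω (h 0 a, η 0 a) =
      ((∫ a, h 0 a : ℝ) : ℂ) * ∫ a, Complex.exp ((ω * η 0 a : ℝ) * Complex.I) := by
    rw [← integral_complex_ofReal]
    exact (hpair 0).integral_fun_comp_mul_comp hZ.fst hZ.snd
      (f := fun x : ℝ => (x : ℂ)) (g := fun x : ℝ => Complex.exp ((ω * x : ℝ) * Complex.I))
      (by fun_prop) (by fun_prop)
  have hlaw := strong_law_ae_comp _ (fun _ _ hij => hindep.indepFun hij) hident
    (measurable_sensorSignal ω) hX
  rw [hmean] at hlaw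
  simp only [sensorSignal, Complex.real_smul, Complex.ofReal_inv,
    Complex.ofReal_natCast] at hlaw
  refine ⟨hlaw, fun θ PT _ v => ?_⟩
  filter_upwards [hlaw] with a ha
  simpa using (ha.const_mul _).add (tendsto_div_sqrt_natCast_atTop (v a))

/-- Over a fading multiple access channel with i.i.d. pairs `(h_i, η_i)`, where
the nonnegative integrable fading amplitude `h_i` is independent of the
symmetric sensing noise `η_i`, the normalized channel output converges almost
surely: `(1/L) ∑ h_i e^{iωη_i} → E[h₁] φ_η(ω)`, and consequently
`z_L = e^{iωθ} √P_T (1/L) ∑ h_i e^{iωη_i} + v/√L` converges almost surely to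
`e^{iωθ} √P_T E[h₁] φ_η(ω)`, so fading does not affect strong consistency. -/
theorem fading_does_not_affect_consistency
    {Ω : Type*} [MeasureSpace Ω] [IsProbabilityMeasure (ℙ : Measure Ω)]
    (h η : ℕ → Ω → ℝ)
    (hmeash : ∀ i, Measurable (h i)) (hmeasη : ∀ i, Measurable (η i))
    (hindep : iIndepFun (fun i a => (h i a, η i a)) ℙ)
    (hident : ∀ i, IdentDistrib (fun a => (h i a, η i a))
      (fun a => (h 0 a, η 0 a)) ℙ ℙ)
    (hpair : ∀ i, IndepFun (h i) (η i) ℙ)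
    (hnonneg : ∀ i a, 0 ≤ h i a)
    (hint : Integrable (h 0) ℙ)
    (hsymm : ∀ i, IdentDistrib (η i) (fun a => -(η i a)) ℙ ℙ)
    (ω : ℝ) :
    (∀ᵐ a ∂ℙ, Tendsto
        (fun L : ℕ => (L : ℂ)⁻¹ * ∑ i ∈ Finset.range L,
          (h i a : ℂ) * Complex.exp ((ω * η i a : ℝ) * Complex.I))
        atTop
        (𝓝 (((∫ a, h 0 a ∂ℙ : ℝ) : ℂ)
          * ∫ a, Complex.exp ((ω * η 0 a : ℝ) * Complex.I) ∂ℙ))) ∧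
    ∀ θ PT : ℝ, 0 < PT → ∀ v : Ω → ℂ,
      ∀ᵐ a ∂ℙ, Tendsto
        (fun L : ℕ => Complex.exp ((ω * θ : ℝ) * Complex.I) * (Real.sqrt PT : ℂ) *
            ((L : ℂ)⁻¹ * ∑ i ∈ Finset.range L,
              (h i a : ℂ) * Complex.exp ((ω * η i a : ℝ) * Complex.I))
          + v a / (Real.sqrt L : ℂ))
        atTop
        (𝓝 (Complex.exp ((ω * θ : ℝ) * Complex.I) * (Real.sqrt PT : ℂ) *
          (((∫ a, h 0 a ∂ℙ : ℝ) : ℂ)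
            * ∫ a, Complex.exp ((ω * η 0 a : ℝ) * Complex.I) ∂ℙ))) :=
  fading_does_not_affect_consistency_general h η hindep hident hpair hint ω
end
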